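/- arXiv:1804.08034 — 12 statements merged into one kernel-verified Lean document; each statement's English description precedes it below -/
import Mathlib

section
/- Let N be a finite nonempty set of flows with positive weights φ_j > 0. For each j ∈ N let E_j be concave, nonnegative, nondecreasing and left-continuous on (0,∞) with E_j(τ) = 0 for τ ≤ 0, and let 𝒞 be convex, nondecreasing and left-continuous on (0,∞) with 𝒞(τ) = 0 for τ ≤ 0. Consider a GPS scheduler in which the service process is exactly C(t) = 𝒞(t) and the arrival process of each flow is exactly A_j(t) = E_j(t) (the lazy/greedy scenario). For each j ∈ N define S_j(τ) := max over subsets M ⊆ N \ {j} of (φ_j / Σ_{k∈N\M} φ_k)·(𝒞(τ) − Σ_{k∈M} E_k(τ)). Then the departures necessarily satisfy D_j(t) = min{E_j(t), S_j(t)} for every j ∈ N and every t ≥ 0. -/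
/-!
Write `B_j = A_j - D_j` for the backlog of flow `j`. The key fact is that a flow whose backlog
vanishes at some time `x > 0` stays empty. For the whole system this holds because `∑ A_j - C` is
concave and cannot increase while the system is empty. For a single flow, let `I` be the flows that
are empty at `x` and `W` the others. Fairness on an interval just before `x`, on which all of `W` is
backlogged, yields a rate `r` such that every `l ∈ I` receives arrivals at rate at most `φ_l r`
while `C - ∑_{l ∈ I} A_l` grows at rate at least `φ(W) r`; by concavity and convexity both bounds
persist after `x`. If the flows of `I` later build up backlog, going back to the last time the one
with the largest normalized backlog was empty multiplies their total backlog by `1 + φ(W) / φ(I)`,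
which contradicts its boundedness. Hence a flow backlogged at `t` was backlogged throughout
`(0, t)`, and work conservation and fairness on `(0, t)` determine `D_j t = min (A_j t) (S_j t)`
by a direct computation.
-/

open Finset Set Filter Topology

section Convexity

variable {𝕜 : Type*} [Field 𝕜] [LinearOrder 𝕜] [IsStrictOrderedRing 𝕜] {s : Set 𝕜} {f : 𝕜 → 𝕜}
  {a b c d k : 𝕜}

theorem ConvexOn.slope_le_slope (hf : ConvexOn 𝕜 s f) (ha : a ∈ s) (hd : d ∈ s) (hab : a < b)
    (hbc : b ≤ c) (hcd : c < d) : (f b - f a) / (b - a) ≤ (f d - f c) / (d - c) := by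
  have hb : b ∈ s := hf.1.ordConnected.out ha hd ⟨hab.le, hbc.trans hcd.le⟩
  have hc : c ∈ s := hf.1.ordConnected.out ha hd ⟨hab.le.trans hbc, hcd.le⟩
  have had : a < d := (hab.trans_le hbc).trans hcd
  calc (f b - f a) / (b - a) ≤ (f d - f a) / (d - a) :=
        hf.secant_mono ha hb hd hab.ne' had.ne' (hbc.trans hcd.le)
    _ = (f a - f d) / (a - d) := by rw [← neg_sub (f d), ← neg_sub d, neg_div_neg_eq]
    _ ≤ (f c - f d) / (c - d) := hf.secant_mono hd ha hc had.ne hcd.ne (hab.le.trans hbc)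
    _ = (f d - f c) / (d - c) := by rw [← neg_sub (f d), ← neg_sub d, neg_div_neg_eq]

theorem ConvexOn.mul_sub_le_sub_of_mul_sub_le (hf : ConvexOn 𝕜 s f) (ha : a ∈ s) (hd : d ∈ s)
    (hab : a < b) (hbc : b ≤ c) (hcd : c < d) (hk : k * (b - a) ≤ f b - f a) :
    k * (d - c) ≤ f d - f c :=
  (le_div_iff₀ (sub_pos.2 hcd)).1 <|
    ((le_div_iff₀ (sub_pos.2 hab)).2 hk).trans (hf.slope_le_slope ha hd hab hbc hcd)

theorem ConcaveOn.sub_le_mul_sub_of_sub_le_mul (hf : ConcaveOn 𝕜 s f) (ha : a ∈ s) (hd : d ∈ s)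
    (hab : a < b) (hbc : b ≤ c) (hcd : c < d) (hk : f b - f a ≤ k * (b - a)) :
    f d - f c ≤ k * (d - c) := by
  have := hf.neg.mul_sub_le_sub_of_mul_sub_le (k := -k) ha hd hab hbc hcd
    (by simp only [Pi.neg_apply]; linarith)
  simp only [Pi.neg_apply] at this
  linarith

theorem concaveOn_finsetSum {ι : Type*} {t : Finset ι} {f : ι → 𝕜 → 𝕜} (hs : Convex 𝕜 s)
    (hf : ∀ i ∈ t, ConcaveOn 𝕜 s (f i)) : ConcaveOn 𝕜 s fun x => ∑ i ∈ t, f i x := by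
  simp_rw [← Finset.sum_apply]
  exact Finset.sum_induction f (ConcaveOn 𝕜 s) (fun _ _ => ConcaveOn.add) (concaveOn_const 0 hs) hf

end Convexity

theorem exists_last_zero {f : ℝ → ℝ} {c d : ℝ} (hcd : c ≤ d) (hc : f c = 0)
    (hf : ∀ u ∈ Ioc c d, ContinuousWithinAt f (Iio u) u) :
    ∃ y ∈ Icc c d, f y = 0 ∧ ∀ u ∈ Ioc y d, f u ≠ 0 := by
  set Z := {u ∈ Icc c d | f u = 0}
  have hZ : BddAbove Z := ⟨d, fun u hu => hu.1.2⟩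
  have hcZ : c ∈ Z := ⟨⟨le_rfl, hcd⟩, hc⟩
  have hy : sSup Z ∈ Icc c d := ⟨le_csSup hZ hcZ, csSup_le ⟨c, hcZ⟩ fun u hu => hu.1.2⟩
  refine ⟨sSup Z, hy, ?_, fun u hu hfu =>
    (le_csSup hZ ⟨⟨hy.1.trans hu.1.le, hu.2⟩, hfu⟩).not_gt hu.1⟩
  by_contra hne
  have hZlt : Z ⊆ Iio (sSup Z) := fun u hu =>
    (le_csSup hZ hu).lt_of_ne fun h => hne (h ▸ hu.2)
  have hcy : c < sSup Z := hZlt hcZ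
  have := ((hf _ ⟨hcy, hy.2⟩).mono hZlt).mem_closure (csSup_mem_closure ⟨c, hcZ⟩ hZ)
    (t := {0}) fun u hu => hu.2
  exact hne (by simpa using this)

theorem exists_Ioo_forall_pos_of_continuousWithinAt {ι : Type*} {W : Finset ι} {g : ι → ℝ → ℝ}
    {x : ℝ} (hx : 0 < x) (hg : ∀ k ∈ W, ContinuousWithinAt (g k) (Iio x) x)
    (hpos : ∀ k ∈ W, 0 < g k x) : ∃ a ∈ Ioo 0 x, ∀ k ∈ W, ∀ u ∈ Ioo a x, 0 < g k u := by
  have h0 : ∀ᶠ u in 𝓝[<] x, 0 < u := mem_of_superset (Ioo_mem_nhdsLT hx) fun _ hu => hu.1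
  have hev : ∀ᶠ u in 𝓝[<] x, 0 < u ∧ ∀ k ∈ W, 0 < g k u :=
    h0.and <| (eventually_all_finset W).2 fun k hk =>
      (hg k hk).eventually_const_lt (hpos k hk)
  obtain ⟨a, hax, hsub⟩ := mem_nhdsLT_iff_exists_Ioo_subset.1 hev
  have hmid : (a + x) / 2 ∈ Ioo a x := ⟨by linarith [mem_Iio.1 hax], by linarith [mem_Iio.1 hax]⟩
  exact ⟨(a + x) / 2, ⟨(hsub hmid).1, hmid.2⟩, fun k hk u hu =>
    (hsub ⟨hmid.1.trans hu.1, hu.2⟩).2 k hk⟩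

theorem nonpos_of_forall_exists_mul_le {α : Type*} {S : Set α} {β : α → ℝ} {c : ℝ} (hc : 1 < c)
    (hbdd : BddAbove (β '' S)) (h : ∀ y ∈ S, 0 < β y → ∃ y' ∈ S, c * β y ≤ β y') {y : α}
    (hy : y ∈ S) : β y ≤ 0 := by
  by_contra! hpos
  have hM : 0 < sSup (β '' S) := hpos.trans_le (le_csSup hbdd (mem_image_of_mem β hy))
  obtain ⟨_, ⟨y₁, hy₁, rfl⟩, hlt⟩ := exists_lt_of_lt_csSup (Nonempty.image β ⟨y, hy⟩)
    (div_lt_self hM hc)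
  obtain ⟨y', hy', hle⟩ := h y₁ hy₁ ((div_pos hM (by linarith)).trans hlt)
  have := le_csSup hbdd (mem_image_of_mem β hy')
  have := (div_lt_iff₀' (by linarith : (0:ℝ) < c)).1 hlt
  linarith

section GPS

variable {ι : Type*}

structure IsGPSScheduler (N : Finset ι) (φ : ι → ℝ) (A D : ι → ℝ → ℝ) (C : ℝ → ℝ) : Prop where
  departure_le : ∀ j ∈ N, ∀ t, D j t ≤ A j t
  work_le : ∀ s t : ℝ, 0 ≤ s → s ≤ t → ∑ j ∈ N, (D j t - D j s) ≤ C t - C s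
  work_eq : ∀ s t : ℝ, 0 ≤ s → s ≤ t →
    (∀ u : ℝ, s < u → u < t → 0 < ∑ j ∈ N, (A j u - D j u)) →
    ∑ j ∈ N, (D j t - D j s) = C t - C s
  fair : ∀ s t : ℝ, 0 ≤ s → s < t → ∀ i ∈ N,
    (∀ u : ℝ, s < u → u < t → 0 < A i u - D i u) →
    ∀ j ∈ N, (D j t - D j s) / φ j ≤ (D i t - D i s) / φ i

namespace IsGPSScheduler

variable {N : Finset ι} {φ : ι → ℝ} {A D : ι → ℝ → ℝ} {C : ℝ → ℝ}

theorem backlog_nonneg (hS : IsGPSScheduler N φ A D C) {j : ι} (hj : j ∈ N) (t : ℝ) :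
    0 ≤ A j t - D j t :=
  sub_nonneg.2 (hS.departure_le j hj t)

theorem sum_backlog_nonneg (hS : IsGPSScheduler N φ A D C) {I : Finset ι} (hI : I ⊆ N) (t : ℝ) :
    0 ≤ ∑ j ∈ I, (A j t - D j t) :=
  sum_nonneg fun _ hj => hS.backlog_nonneg (hI hj) t

theorem sum_backlog_eq_zero_of_le (hS : IsGPSScheduler N φ A D C)
    (hA : ∀ j ∈ N, ConcaveOn ℝ (Ioi 0) (A j)) (hC : ConvexOn ℝ (Ioi 0) C)
    (hB : ∀ j ∈ N, ∀ t, 0 < t → ContinuousWithinAt (fun u => A j u - D j u) (Iio t) t)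
    {u v : ℝ} (hu : 0 < u) (huv : u ≤ v) (h : ∑ j ∈ N, (A j u - D j u) = 0) :
    ∑ j ∈ N, (A j v - D j v) = 0 := by
  by_contra hv
  obtain ⟨s, ⟨hus, hsv⟩, hs, hlast⟩ :=
    exists_last_zero (f := fun t => ∑ j ∈ N, (A j t - D j t)) huv h fun t ht =>
      tendsto_finsetSum N fun j hj => hB j hj t (hu.trans_le ht.1.le)
  have hsv' : s < v := hsv.lt_of_ne (by rintro rfl; exact hv hs)
  have hs0 : 0 < s := hu.trans_le hus
  have hbusy := hS.work_eq s v hs0.le hsv fun t h1 h2 =>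
    (hS.sum_backlog_nonneg subset_rfl t).lt_of_ne' (hlast t ⟨h1, h2.le⟩)
  have hidle := hS.work_le (s / 2) s (by positivity) (by linarith)
  have hle : ∑ j ∈ N, D j (s / 2) ≤ ∑ j ∈ N, A j (s / 2) :=
    sum_le_sum fun j hj => hS.departure_le j hj _
  -- `∑ A - C` is concave and does not increase while the system is empty
  have hg : ConcaveOn ℝ (Ioi 0) fun t => ∑ j ∈ N, A j t - C t :=
    (concaveOn_finsetSum (convex_Ioi 0) hA).sub hC
  have hdec := hg.sub_le_mul_sub_of_sub_le_mul (k := 0) (half_pos hs0) (hs0.trans hsv')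
    (half_lt_self hs0) le_rfl hsv'
    (by simp only [sum_sub_distrib] at hs hidle; linarith)
  have hpos := (hS.sum_backlog_nonneg subset_rfl v).lt_of_ne' hv
  simp only [sum_sub_distrib] at hs hbusy hpos hdec
  linarith

variable [DecidableEq ι]

theorem exists_fair_share (hS : IsGPSScheduler N φ A D C) (hφ : ∀ j ∈ N, 0 < φ j) {a x : ℝ}
    (ha : 0 ≤ a) (hax : a < x) {I : Finset ι} (hIN : I ⊆ N) (hI : ∀ l ∈ I, A l x = D l x)
    (hWne : (N \ I).Nonempty)
    (hback : ∀ k ∈ N \ I, ∀ u, a < u → u < x → 0 < A k u - D k u) :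
    ∃ ρ, (∀ l ∈ I, A l x - A l a ≤ φ l * ρ) ∧
      (∑ k ∈ N \ I, φ k) * ρ ≤ (C x - ∑ l ∈ I, A l x) - (C a - ∑ l ∈ I, A l a) := by
  obtain ⟨w, hw⟩ := hWne
  have hwN := (mem_sdiff.1 hw).1
  set ρ := (D w x - D w a) / φ w
  have hle : ∀ l ∈ N, D l x - D l a ≤ φ l * ρ := fun l hl => by
    have := hS.fair a x ha hax w hwN (hback w hw) l hl
    rwa [div_le_iff₀ (hφ l hl), mul_comm] at this
  have hge : ∀ k ∈ N \ I, φ k * ρ ≤ D k x - D k a := fun k hk => by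
    have := hS.fair a x ha hax k (mem_sdiff.1 hk).1 (hback k hk) w hwN
    rwa [le_div_iff₀ (hφ k (mem_sdiff.1 hk).1), mul_comm] at this
  have hIinc : ∀ l ∈ I, A l x - A l a ≤ D l x - D l a := fun l hl => by
    linarith [hI l hl, hS.backlog_nonneg (hIN hl) a]
  have hwork := hS.work_eq a x ha hax.le fun u h1 h2 => (hback w hw u h1 h2).trans_le
    (single_le_sum (fun k hk => hS.backlog_nonneg hk u) hwN)
  refine ⟨ρ, fun l hl => (hIinc l hl).trans (hle l (hIN hl)), ?_⟩
  have hW : (∑ k ∈ N \ I, φ k) * ρ ≤ ∑ k ∈ N \ I, (D k x - D k a) := by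
    rw [sum_mul]
    exact sum_le_sum hge
  have hI' := sum_le_sum hIinc
  rw [← sum_sdiff hIN] at hwork
  simp only [sum_sub_distrib] at hwork hW hI'
  linarith

theorem exists_rate (hS : IsGPSScheduler N φ A D C) (hφ : ∀ j ∈ N, 0 < φ j)
    (hA : ∀ j ∈ N, ConcaveOn ℝ (Ioi 0) (A j)) (hC : ConvexOn ℝ (Ioi 0) C)
    (hB : ∀ j ∈ N, ∀ t, 0 < t → ContinuousWithinAt (fun u => A j u - D j u) (Iio t) t)
    {x : ℝ} (hx : 0 < x) {I : Finset ι} (hIN : I ⊆ N) (hI : ∀ l ∈ I, A l x = D l x)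
    (hW : ∀ k ∈ N \ I, 0 < A k x - D k x) (hWne : (N \ I).Nonempty) :
    ∃ r, (∀ l ∈ I, ∀ s t, x ≤ s → s < t → A l t - A l s ≤ φ l * r * (t - s)) ∧
      ∀ s t, x ≤ s → s < t →
        (∑ k ∈ N \ I, φ k) * r * (t - s) ≤ (C t - ∑ l ∈ I, A l t) - (C s - ∑ l ∈ I, A l s) := by
  obtain ⟨a, ⟨ha, hax⟩, hback⟩ := exists_Ioo_forall_pos_of_continuousWithinAt hx
    (fun k hk => hB k (mem_sdiff.1 hk).1 x hx) hW
  obtain ⟨ρ, hρA, hρF⟩ := hS.exists_fair_share hφ ha.le hax hIN hI hWne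
    fun k hk u h1 h2 => hback k hk u ⟨h1, h2⟩
  have hcancel : ρ / (x - a) * (x - a) = ρ := div_mul_cancel₀ _ (sub_pos.2 hax).ne'
  have hF : ConvexOn ℝ (Ioi 0) fun t => C t - ∑ l ∈ I, A l t :=
    hC.sub (concaveOn_finsetSum (convex_Ioi 0) fun l hl => hA l (hIN hl))
  refine ⟨ρ / (x - a), fun l hl s t hs hst => ?_, fun s t hs hst => ?_⟩
  · exact (hA l (hIN hl)).sub_le_mul_sub_of_sub_le_mul ha (hx.trans_le hs |>.trans hst) hax hs hst
      (by rw [mul_assoc, hcancel]; exact hρA l hl)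
  · exact hF.mul_sub_le_sub_of_mul_sub_le ha (hx.trans_le hs |>.trans hst) hax hs hst
      (by rw [mul_assoc, hcancel]; exact hρF)

theorem exists_sum_backlog_add_le (hS : IsGPSScheduler N φ A D C) (hφ : ∀ j ∈ N, 0 < φ j)
    (hB : ∀ j ∈ N, ∀ t, 0 < t → ContinuousWithinAt (fun u => A j u - D j u) (Iio t) t)
    {x : ℝ} (hx : 0 < x) {I : Finset ι} (hIN : I ⊆ N) {l₀ : ι} (hl₀ : l₀ ∈ I)
    (hl₀x : A l₀ x = D l₀ x) {r : ℝ}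
    (hrA : ∀ s t, x ≤ s → s < t → A l₀ t - A l₀ s ≤ φ l₀ * r * (t - s))
    (hrF : ∀ s t, x ≤ s → s < t →
      (∑ k ∈ N \ I, φ k) * r * (t - s) ≤ (C t - ∑ l ∈ I, A l t) - (C s - ∑ l ∈ I, A l s))
    {y : ℝ} (hxy : x < y) (hpos : 0 < A l₀ y - D l₀ y) :
    ∃ y' ∈ Ico x y, ∑ l ∈ I, (A l y - D l y) + (∑ k ∈ N \ I, φ k) * ((A l₀ y - D l₀ y) / φ l₀)
      ≤ ∑ l ∈ I, (A l y' - D l y') := by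
  have hl₀N := hIN hl₀
  obtain ⟨y', ⟨hxy', hy'y⟩, hz, hlast⟩ := exists_last_zero (f := fun u => A l₀ u - D l₀ u)
    hxy.le (sub_eq_zero.2 hl₀x) fun u hu => hB l₀ hl₀N u (hx.trans hu.1)
  replace hy'y : y' < y := hy'y.lt_of_ne (by rintro rfl; exact hpos.ne' hz)
  have hy'0 : 0 ≤ y' := (hx.trans_le hxy').le
  have hback : ∀ u, y' < u → u < y → 0 < A l₀ u - D l₀ u := fun u h1 h2 =>
    (hS.backlog_nonneg hl₀N u).lt_of_ne' (hlast u ⟨h1, h2.le⟩)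
  set ρ := (D l₀ y - D l₀ y') / φ l₀
  have hW : ∑ k ∈ N \ I, (D k y - D k y') ≤ (∑ k ∈ N \ I, φ k) * ρ := by
    rw [sum_mul]
    refine sum_le_sum fun k hk => ?_
    have := hS.fair y' y hy'0 hy'y l₀ hl₀N hback k (mem_sdiff.1 hk).1
    rwa [div_le_iff₀ (hφ k (mem_sdiff.1 hk).1), mul_comm] at this
  have hρ : ρ + (A l₀ y - D l₀ y) / φ l₀ ≤ r * (y - y') := by
    rw [← add_div, div_le_iff₀ (hφ l₀ hl₀N)]
    have := hrA y' y hxy' hy'y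
    linarith
  have hwork := hS.work_eq y' y hy'0 hy'y.le fun u h1 h2 => (hback u h1 h2).trans_le
    (single_le_sum (fun k hk => hS.backlog_nonneg hk u) hl₀N)
  rw [← sum_sdiff hIN] at hwork
  have hF := hrF y' y hxy' hy'y
  have hP : 0 ≤ ∑ k ∈ N \ I, φ k := sum_nonneg fun k hk => (hφ k (mem_sdiff.1 hk).1).le
  have := mul_le_mul_of_nonneg_left hρ hP
  refine ⟨y', ⟨hxy', hy'y⟩, ?_⟩
  simp only [sum_sub_distrib] at hwork hW hF ⊢
  linarith

theorem exists_sum_backlog_mul_le (hS : IsGPSScheduler N φ A D C) (hφ : ∀ j ∈ N, 0 < φ j)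
    (hB : ∀ j ∈ N, ∀ t, 0 < t → ContinuousWithinAt (fun u => A j u - D j u) (Iio t) t)
    {x : ℝ} (hx : 0 < x) {I : Finset ι} (hIN : I ⊆ N) (hI : ∀ l ∈ I, A l x = D l x) {r : ℝ}
    (hrA : ∀ l ∈ I, ∀ s t, x ≤ s → s < t → A l t - A l s ≤ φ l * r * (t - s))
    (hrF : ∀ s t, x ≤ s → s < t →
      (∑ k ∈ N \ I, φ k) * r * (t - s) ≤ (C t - ∑ l ∈ I, A l t) - (C s - ∑ l ∈ I, A l s))
    {y : ℝ} (hxy : x < y) (hpos : 0 < ∑ l ∈ I, (A l y - D l y)) :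
    ∃ y' ∈ Ioo x y, (1 + (∑ k ∈ N \ I, φ k) / ∑ l ∈ I, φ l) * ∑ l ∈ I, (A l y - D l y)
      ≤ ∑ l ∈ I, (A l y' - D l y') := by
  have hIne : I.Nonempty := nonempty_of_sum_ne_zero hpos.ne'
  obtain ⟨l₀, hl₀, hmax⟩ := exists_max_image I (fun l => (A l y - D l y) / φ l) hIne
  have hφl₀ := hφ l₀ (hIN hl₀)
  set q := (A l₀ y - D l₀ y) / φ l₀
  have hΦI : 0 < ∑ l ∈ I, φ l := sum_pos (fun l hl => hφ l (hIN hl)) hIne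
  have hΦW : 0 ≤ ∑ k ∈ N \ I, φ k := sum_nonneg fun k hk => (hφ k (mem_sdiff.1 hk).1).le
  have hβq : ∑ l ∈ I, (A l y - D l y) ≤ (∑ l ∈ I, φ l) * q := by
    rw [sum_mul]
    refine sum_le_sum fun l hl => ?_
    have := hmax l hl
    rwa [div_le_iff₀ (hφ l (hIN hl)), mul_comm] at this
  have hq : 0 < q := pos_of_mul_pos_right (hpos.trans_le hβq) hΦI.le
  obtain ⟨y', ⟨hxy', hy'y⟩, hgrow⟩ := hS.exists_sum_backlog_add_le hφ hB hx hIN hl₀ (hI l₀ hl₀)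
    (hrA l₀ hl₀) hrF hxy ((div_pos_iff_of_pos_right hφl₀).1 hq)
  have hx0 : ∑ l ∈ I, (A l x - D l x) = 0 := sum_eq_zero fun l hl => sub_eq_zero.2 (hI l hl)
  have hne : x ≠ y' := by
    rintro rfl
    nlinarith
  refine ⟨y', ⟨hxy'.lt_of_ne hne, hy'y⟩, ?_⟩
  have : (∑ k ∈ N \ I, φ k) / (∑ l ∈ I, φ l) * ∑ l ∈ I, (A l y - D l y)
      ≤ (∑ k ∈ N \ I, φ k) * q := by
    calc _ ≤ (∑ k ∈ N \ I, φ k) / (∑ l ∈ I, φ l) * ((∑ l ∈ I, φ l) * q) :=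
          mul_le_mul_of_nonneg_left hβq (div_nonneg hΦW hΦI.le)
      _ = _ := by field_simp
  linarith

theorem backlog_eq_zero_of_le (hS : IsGPSScheduler N φ A D C) (hφ : ∀ j ∈ N, 0 < φ j)
    (hA : ∀ j ∈ N, ConcaveOn ℝ (Ioi 0) (A j)) (hAmono : ∀ j ∈ N, MonotoneOn (A j) (Ioi 0))
    (hC : ConvexOn ℝ (Ioi 0) C) (hD : ∀ j ∈ N, Monotone (D j))
    (hB : ∀ j ∈ N, ∀ t, 0 < t → ContinuousWithinAt (fun u => A j u - D j u) (Iio t) t)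
    {m : ι} (hm : m ∈ N) {w v : ℝ} (hw : 0 < w) (hwv : w ≤ v) (h : A m w = D m w) :
    A m v = D m v := by
  by_contra hv
  obtain ⟨x, ⟨hwx, hxv⟩, hx0, hlast⟩ := exists_last_zero (f := fun u => A m u - D m u) hwv
    (sub_eq_zero.2 h) fun u hu => hB m hm u (hw.trans hu.1)
  have hx : 0 < x := hw.trans_le hwx
  have hxv' : x < v := hxv.lt_of_ne (by rintro rfl; exact hv (sub_eq_zero.1 hx0))
  have hmv : 0 < A m v - D m v := (hS.backlog_nonneg hm v).lt_of_ne' (hlast v ⟨hxv', le_rfl⟩)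
  set I := N.filter fun l => A l x = D l x
  have hIN : I ⊆ N := filter_subset _ _
  have hI : ∀ l ∈ I, A l x = D l x := fun l hl => (mem_filter.1 hl).2
  have hmI : m ∈ I := mem_filter.2 ⟨hm, sub_eq_zero.1 hx0⟩
  have hW : ∀ k ∈ N \ I, 0 < A k x - D k x := fun k hk => by
    obtain ⟨hkN, hkI⟩ := mem_sdiff.1 hk
    exact (hS.backlog_nonneg hkN x).lt_of_ne' fun h => hkI (mem_filter.2 ⟨hkN, sub_eq_zero.1 h⟩)
  have hWne : (N \ I).Nonempty := by
    rw [Finset.nonempty_iff_ne_empty, Ne, sdiff_eq_empty_iff_subset]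
    intro hNI
    have := hS.sum_backlog_eq_zero_of_le hA hC hB hx hxv'.le
      (sum_eq_zero fun l hl => sub_eq_zero.2 (hI l (hNI hl)))
    exact hmv.ne' ((sum_eq_zero_iff_of_nonneg fun l hl => hS.backlog_nonneg hl v).1 this m hm)
  obtain ⟨r, hrA, hrF⟩ := hS.exists_rate hφ hA hC hB hx hIN hI hW hWne
  have hbdd : BddAbove ((fun y => ∑ l ∈ I, (A l y - D l y)) '' Ioc x v) := by
    refine ⟨∑ l ∈ I, (A l v - D l x), ?_⟩
    rintro _ ⟨y, ⟨hxy, hyv⟩, rfl⟩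
    exact sum_le_sum fun l hl => sub_le_sub
      (hAmono l (hIN hl) (hx.trans hxy) (hx.trans hxv') hyv) (hD l (hIN hl) hxy.le)
  have hfactor : 1 < 1 + (∑ k ∈ N \ I, φ k) / ∑ l ∈ I, φ l :=
    lt_add_of_pos_right 1 (div_pos (sum_pos (fun k hk => hφ k (mem_sdiff.1 hk).1) hWne)
      (sum_pos (fun l hl => hφ l (hIN hl)) ⟨m, hmI⟩))
  have hnonpos := nonpos_of_forall_exists_mul_le hfactor hbdd (fun y hy hpos => by
    obtain ⟨y', hy', hle⟩ := hS.exists_sum_backlog_mul_le hφ hB hx hIN hI hrA hrF hy.1 hpos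
    exact ⟨y', ⟨hy'.1, hy'.2.le.trans hy.2⟩, hle⟩) ⟨hxv', le_rfl⟩
  exact hnonpos.not_gt (hmv.trans_le (single_le_sum (fun l hl => hS.backlog_nonneg (hIN hl) v) hmI))

end IsGPSScheduler

noncomputable def gpsShare [DecidableEq ι] (N : Finset ι) (φ a : ι → ℝ) (c : ℝ) (j : ι) : ℝ :=
  (N.erase j).powerset.sup' ⟨∅, empty_mem_powerset _⟩ fun M =>
    (φ j / ∑ k ∈ N \ M, φ k) * (c - ∑ k ∈ M, a k)

section Allocation

variable [DecidableEq ι] {N : Finset ι} {φ a d : ι → ℝ} {c : ℝ} {j : ι}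

theorem le_gpsShare (hφ : ∀ k ∈ N, 0 < φ k) (hda : ∀ k ∈ N, d k ≤ a k) (hc : ∑ k ∈ N, d k ≤ c)
    (hfair : ∀ i ∈ N, d i < a i → φ i * d j ≤ φ j * d i) (hj : j ∈ N) :
    d j ≤ gpsShare N φ a c j := by
  set M := (N.filter fun k => d k = a k).erase j
  have hM : M ∈ (N.erase j).powerset :=
    mem_powerset.2 (erase_subset_erase j (filter_subset (fun k => d k = a k) N))
  have hjM : j ∈ N \ M := mem_sdiff.2 ⟨hj, notMem_erase j _⟩
  have hΦ : 0 < ∑ k ∈ N \ M, φ k := sum_pos (fun k hk => hφ k (mem_sdiff.1 hk).1) ⟨j, hjM⟩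
  have hout : ∑ k ∈ N \ M, φ k * d j ≤ ∑ k ∈ N \ M, φ j * d k := sum_le_sum fun k hk => by
    obtain ⟨hkN, hkM⟩ := mem_sdiff.1 hk
    by_cases hkj : k = j
    · rw [hkj]
    · exact hfair k hkN <| (hda k hkN).lt_of_ne fun h =>
        hkM (mem_erase.2 ⟨hkj, mem_filter.2 ⟨hkN, h⟩⟩)
  rw [← sum_mul, ← mul_sum] at hout
  have hMa : ∑ k ∈ M, a k = ∑ k ∈ M, d k :=
    sum_congr rfl fun k hk => (mem_filter.1 (mem_of_mem_erase hk)).2.symm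
  have hsplit := sum_sdiff ((mem_powerset.1 hM).trans (erase_subset j N)) (f := d)
  have := mul_le_mul_of_nonneg_left (show ∑ k ∈ N \ M, d k ≤ c - ∑ k ∈ M, a k by linarith)
    (hφ j hj).le
  refine le_trans ?_ (le_sup' _ hM)
  rw [div_mul_eq_mul_div, le_div_iff₀ hΦ]
  linarith

theorem gpsShare_le (hφ : ∀ k ∈ N, 0 < φ k) (hda : ∀ k ∈ N, d k ≤ a k) (hc : c ≤ ∑ k ∈ N, d k)
    (hfair : ∀ k ∈ N, φ j * d k ≤ φ k * d j) (hj : j ∈ N) : gpsShare N φ a c j ≤ d j := by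
  refine sup'_le _ _ fun M hM => ?_
  have hMN : M ⊆ N := (mem_powerset.1 hM).trans (erase_subset _ _)
  have hjM : j ∈ N \ M := mem_sdiff.2 ⟨hj, fun h => notMem_erase j N (mem_powerset.1 hM h)⟩
  have hΦ : 0 < ∑ k ∈ N \ M, φ k := sum_pos (fun k hk => hφ k (mem_sdiff.1 hk).1) ⟨j, hjM⟩
  have hin : ∑ k ∈ N \ M, φ j * d k ≤ ∑ k ∈ N \ M, φ k * d j :=
    sum_le_sum fun k hk => hfair k (mem_sdiff.1 hk).1
  rw [← mul_sum, ← sum_mul] at hin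
  have hMa : ∑ k ∈ M, d k ≤ ∑ k ∈ M, a k := sum_le_sum fun k hk => hda k (hMN hk)
  have hsplit := sum_sdiff hMN (f := d)
  have := mul_le_mul_of_nonneg_left (show c - ∑ k ∈ M, a k ≤ ∑ k ∈ N \ M, d k by linarith)
    (hφ j hj).le
  rw [div_mul_eq_mul_div, div_le_iff₀ hΦ]
  linarith

theorem eq_min_gpsShare (hφ : ∀ k ∈ N, 0 < φ k) (hda : ∀ k ∈ N, d k ≤ a k)
    (hc : ∑ k ∈ N, d k ≤ c) (hbusy : ∀ i ∈ N, d i < a i → ∑ k ∈ N, d k = c)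
    (hfair : ∀ i ∈ N, d i < a i → ∀ k ∈ N, φ i * d k ≤ φ k * d i) (hj : j ∈ N) :
    d j = min (a j) (gpsShare N φ a c j) := by
  have hle := le_gpsShare hφ hda hc (fun i hi hlt => hfair i hi hlt j hj) hj
  rcases (hda j hj).lt_or_eq with hlt | heq
  · have hge := gpsShare_le hφ hda (hbusy j hj hlt).ge (hfair j hj hlt) hj
    rw [min_eq_right (hge.trans (hda j hj))]
    exact le_antisymm hle hge
  · rw [min_eq_left (heq ▸ hle), heq]

end Allocation

theorem IsGPSScheduler.departure_eq_min_gpsShare [DecidableEq ι] {N : Finset ι} {φ : ι → ℝ}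
    {A D : ι → ℝ → ℝ} {C : ℝ → ℝ} (hS : IsGPSScheduler N φ A D C) (hφ : ∀ j ∈ N, 0 < φ j)
    (hA : ∀ j ∈ N, ConcaveOn ℝ (Ioi 0) (A j)) (hAmono : ∀ j ∈ N, MonotoneOn (A j) (Ioi 0))
    (hC : ConvexOn ℝ (Ioi 0) C) (hD : ∀ j ∈ N, Monotone (D j))
    (hB : ∀ j ∈ N, ∀ t, 0 < t → ContinuousWithinAt (fun u => A j u - D j u) (Iio t) t)
    (hA0 : ∀ j ∈ N, A j 0 = 0) (hD0 : ∀ j ∈ N, D j 0 = 0) (hC0 : C 0 = 0) {j : ι} (hj : j ∈ N)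
    {t : ℝ} (ht : 0 ≤ t) : D j t = min (A j t) (gpsShare N φ (fun k => A k t) (C t) j) := by
  have hback : ∀ i ∈ N, D i t < A i t → 0 < t ∧ ∀ u, 0 < u → u < t → 0 < A i u - D i u := by
    intro i hi hlt
    refine ⟨ht.lt_of_ne ?_, fun u hu hut => (hS.backlog_nonneg hi u).lt_of_ne' fun h => hlt.ne' ?_⟩
    · rintro rfl
      rw [hA0 i hi, hD0 i hi] at hlt
      exact lt_irrefl 0 hlt
    · exact hS.backlog_eq_zero_of_le hφ hA hAmono hC hD hB hi hu hut.le (sub_eq_zero.1 h)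
  have hsum0 : ∑ k ∈ N, D k 0 = 0 := sum_eq_zero hD0
  refine eq_min_gpsShare hφ (fun k hk => hS.departure_le k hk t) ?_ (fun i hi hlt => ?_)
    (fun i hi hlt k hk => ?_) hj
  · have := hS.work_le 0 t le_rfl ht
    rwa [sum_sub_distrib, hsum0, hC0, sub_zero, sub_zero] at this
  · have := hS.work_eq 0 t le_rfl ht fun u hu hut => ((hback i hi hlt).2 u hu hut).trans_le
      (single_le_sum (fun k hk => hS.backlog_nonneg hk u) hi)
    rwa [sum_sub_distrib, hsum0, hC0, sub_zero, sub_zero] at this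
  · have := hS.fair 0 t le_rfl (hback i hi hlt).1 i hi (hback i hi hlt).2 k hk
    rw [hD0 k hk, hD0 i hi, sub_zero, sub_zero, div_le_div_iff₀ (hφ k hk) (hφ i hi)] at this
    linarith

end GPS

theorem gps_greedy_lazy_departures_general {ι : Type*} [DecidableEq ι]
    (N : Finset ι)
    (φ : ι → ℝ) (E D : ι → ℝ → ℝ) (𝒞 : ℝ → ℝ)
    (hφ : ∀ j ∈ N, 0 < φ j)
    (hEconc : ∀ j ∈ N, ConcaveOn ℝ (Set.Ioi (0:ℝ)) (E j))
    (hEmono : ∀ j ∈ N, MonotoneOn (E j) (Set.Ioi (0:ℝ)))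
    (hElc : ∀ j ∈ N, ∀ τ : ℝ, 0 < τ → ContinuousWithinAt (E j) (Set.Iio τ) τ)
    (hEzero : ∀ j ∈ N, ∀ τ : ℝ, τ ≤ 0 → E j τ = 0)
    (h𝒞conv : ConvexOn ℝ (Set.Ioi (0:ℝ)) 𝒞)
    (h𝒞zero : ∀ τ : ℝ, τ ≤ 0 → 𝒞 τ = 0)
    (hDmono : ∀ j ∈ N, Monotone (D j))
    (hDlc : ∀ j ∈ N, ∀ t : ℝ, ContinuousWithinAt (D j) (Set.Iio t) t)
    (hDzero : ∀ j ∈ N, ∀ t : ℝ, t ≤ 0 → D j t = 0)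
    (hDA : ∀ j ∈ N, ∀ t : ℝ, D j t ≤ E j t)
    (hwork_le : ∀ s t : ℝ, 0 ≤ s → s ≤ t → ∑ j ∈ N, (D j t - D j s) ≤ 𝒞 t - 𝒞 s)
    (hwork_eq : ∀ s t : ℝ, 0 ≤ s → s ≤ t →
      (∀ u : ℝ, s < u → u < t → 0 < ∑ j ∈ N, (E j u - D j u)) →
      ∑ j ∈ N, (D j t - D j s) = 𝒞 t - 𝒞 s)
    (hfair : ∀ s t : ℝ, 0 ≤ s → s < t → ∀ i ∈ N,
      (∀ u : ℝ, s < u → u < t → 0 < E i u - D i u) →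
      ∀ j ∈ N, (D j t - D j s) / φ j ≤ (D i t - D i s) / φ i) :
    ∀ j ∈ N, ∀ t : ℝ, 0 ≤ t →
      D j t =
        min (E j t)
          ((N.erase j).powerset.sup' ⟨∅, Finset.empty_mem_powerset _⟩
            (fun M => (φ j / ∑ k ∈ N \ M, φ k) * (𝒞 t - ∑ k ∈ M, E k t))) := by
  have hS : IsGPSScheduler N φ E D 𝒞 := ⟨hDA, hwork_le, hwork_eq, hfair⟩
  intro j hj t ht
  exact hS.departure_eq_min_gpsShare hφ hEconc hEmono h𝒞conv hDmono
    (fun k hk u hu => (hElc k hk u hu).sub (hDlc k hk u)) (fun k hk => hEzero k hk 0 le_rfl)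
    (fun k hk => hDzero k hk 0 le_rfl) (h𝒞zero 0 le_rfl) hj ht

/-- **greedy/lazy scenario.** Consider a GPS scheduler whose service
process is exactly the convex curve `𝒞` and whose arrival processes are exactly the
concave envelopes `E_j`.  Then the departures necessarily satisfy
`D_j(t) = min {E_j(t), S_j(t)}` for all `j ∈ N` and `t ≥ 0`, where
`S_j(τ) := max_{M ⊆ N\{j}} (φ_j / ∑_{k∉M} φ_k) (𝒞(τ) - ∑_{k∈M} E_k(τ))`. -/
theorem gps_greedy_lazy_departures {ι : Type*} [DecidableEq ι]
    (N : Finset ι) (hN : N.Nonempty)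
    (φ : ι → ℝ) (E D : ι → ℝ → ℝ) (𝒞 : ℝ → ℝ)
    (hφ : ∀ j ∈ N, 0 < φ j)
    (hEconc : ∀ j ∈ N, ConcaveOn ℝ (Set.Ioi (0:ℝ)) (E j))
    (hEnonneg : ∀ j ∈ N, ∀ τ : ℝ, 0 < τ → 0 ≤ E j τ)
    (hEmono : ∀ j ∈ N, MonotoneOn (E j) (Set.Ioi (0:ℝ)))
    (hElc : ∀ j ∈ N, ∀ τ : ℝ, 0 < τ → ContinuousWithinAt (E j) (Set.Iio τ) τ)
    (hEzero : ∀ j ∈ N, ∀ τ : ℝ, τ ≤ 0 → E j τ = 0)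
    (h𝒞conv : ConvexOn ℝ (Set.Ioi (0:ℝ)) 𝒞)
    (h𝒞mono : MonotoneOn 𝒞 (Set.Ioi (0:ℝ)))
    (h𝒞lc : ∀ τ : ℝ, 0 < τ → ContinuousWithinAt 𝒞 (Set.Iio τ) τ)
    (h𝒞zero : ∀ τ : ℝ, τ ≤ 0 → 𝒞 τ = 0)
    (hDmono : ∀ j ∈ N, Monotone (D j))
    (hDlc : ∀ j ∈ N, ∀ t : ℝ, ContinuousWithinAt (D j) (Set.Iio t) t)
    (hDzero : ∀ j ∈ N, ∀ t : ℝ, t ≤ 0 → D j t = 0)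
    (hDA : ∀ j ∈ N, ∀ t : ℝ, D j t ≤ E j t)
    (hwork_le : ∀ s t : ℝ, 0 ≤ s → s ≤ t → ∑ j ∈ N, (D j t - D j s) ≤ 𝒞 t - 𝒞 s)
    (hwork_eq : ∀ s t : ℝ, 0 ≤ s → s ≤ t →
      (∀ u : ℝ, s < u → u < t → 0 < ∑ j ∈ N, (E j u - D j u)) →
      ∑ j ∈ N, (D j t - D j s) = 𝒞 t - 𝒞 s)
    (hfair : ∀ s t : ℝ, 0 ≤ s → s < t → ∀ i ∈ N,
      (∀ u : ℝ, s < u → u < t → 0 < E i u - D i u) →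
      ∀ j ∈ N, (D j t - D j s) / φ j ≤ (D i t - D i s) / φ i) :
    ∀ j ∈ N, ∀ t : ℝ, 0 ≤ t →
      D j t =
        min (E j t)
          ((N.erase j).powerset.sup' ⟨∅, Finset.empty_mem_powerset _⟩
            (fun M => (φ j / ∑ k ∈ N \ M, φ k) * (𝒞 t - ∑ k ∈ M, E k t))) :=
  gps_greedy_lazy_departures_general N φ E D 𝒞 hφ hEconc hEmono hElc hEzero h𝒞conv h𝒞zero hDmono
    hDlc hDzero hDA hwork_le hwork_eq hfair
end

section
/- Let N be a finite set with at least two elements, weights φ_j > 0, nonnegative requests x_j ≥ 0 for j ∈ N, and a resource X ≥ 0. Define the fair share f := max over proper subsets M ⊊ N of (X − Σ_{j∈M} x_j)/(Σ_{j∈N\M} φ_j). Fix i ∈ N and define f_i := max over subsets M ⊆ N \ {i} of (φ_i / Σ_{j∈N\M} φ_j)·(X − Σ_{j∈M} x_j). Then min{x_i, φ_i·f} = min{x_i, f_i}. -/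
/-- The fair share `f := max_{M ⊊ N} (X - ∑_{j∈M} x j) / (∑_{j∈N\M} φ j)`,
where the maximum ranges over all proper subsets of `N`. -/
noncomputable def fairShare {ι : Type*} [DecidableEq ι] (N : Finset ι) (hN : N.Nonempty)
    (φ x : ι → ℝ) (X : ℝ) : ℝ :=
  (N.powerset.erase N).sup'
    ⟨∅, Finset.mem_erase.mpr ⟨hN.ne_empty.symm, Finset.empty_mem_powerset N⟩⟩
    (fun M => (X - ∑ j ∈ M, x j) / ∑ j ∈ N \ M, φ j)

/-- For `|N| ≥ 2`, `i ∈ N`, the fair allocation to player `i` can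
equivalently be computed as `min {x_i, φ_i f} = min {x_i, f_i}`, where
`f_i := max_{M ⊆ N\{i}} (φ_i / ∑_{j∉M} φ_j) (X - ∑_{j∈M} x_j)`. -/
theorem min_fairShare_eq_min_fi {ι : Type*} [DecidableEq ι]
    (N : Finset ι) (hN : N.Nonempty) (hN2 : 2 ≤ N.card)
    (φ x : ι → ℝ) (X : ℝ)
    (hφ : ∀ j ∈ N, 0 < φ j) (hx : ∀ j ∈ N, 0 ≤ x j) (hX : 0 ≤ X)
    (i : ι) (hi : i ∈ N) :
    min (x i) (φ i * fairShare N hN φ x X) =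
      min (x i)
        ((N.erase i).powerset.sup' ⟨∅, Finset.empty_mem_powerset _⟩
          (fun M => (φ i / ∑ j ∈ N \ M, φ j) * (X - ∑ j ∈ M, x j))) := by
  set f := fairShare N hN φ x X with hf
  set fi := (N.erase i).powerset.sup' ⟨∅, Finset.empty_mem_powerset _⟩
      (fun M => (φ i / ∑ j ∈ N \ M, φ j) * (X - ∑ j ∈ M, x j)) with hfi
  have hφi : 0 < φ i := hφ i hi
  -- positivity of denominators for proper subsets
  have hpos : ∀ M ∈ N.powerset.erase N, 0 < ∑ j ∈ N \ M, φ j := by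
    intro M hM
    rw [Finset.mem_erase, Finset.mem_powerset] at hM
    have hne : (N \ M).Nonempty := by
      rw [Finset.sdiff_nonempty]
      intro h
      exact hM.1 (Finset.Subset.antisymm hM.2 h)
    exact Finset.sum_pos (fun j hj => hφ j (Finset.mem_sdiff.mp hj).1) hne
  -- every M ⊆ N \ {i} is a proper subset of N
  have hmem : ∀ M ∈ (N.erase i).powerset, M ∈ N.powerset.erase N := by
    intro M hM
    rw [Finset.mem_powerset] at hM
    refine Finset.mem_erase.mpr ⟨?_, Finset.mem_powerset.mpr
      (hM.trans (Finset.erase_subset i N))⟩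
    intro h
    rw [h] at hM
    exact (Finset.mem_erase.mp (hM hi)).1 rfl
  have h1 : fi ≤ φ i * f := by
    apply Finset.sup'_le
    intro M hM
    have hS := hpos M (hmem M hM)
    have : (X - ∑ j ∈ M, x j) / ∑ j ∈ N \ M, φ j ≤ f := by
      rw [hf, fairShare]
      exact Finset.le_sup' (fun M => (X - ∑ j ∈ M, x j) / ∑ j ∈ N \ M, φ j) (hmem M hM)
    calc (φ i / ∑ j ∈ N \ M, φ j) * (X - ∑ j ∈ M, x j)
        = φ i * ((X - ∑ j ∈ M, x j) / ∑ j ∈ N \ M, φ j) := by ring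
      _ ≤ φ i * f := by nlinarith
  have h2 : min (x i) (φ i * f) ≤ fi := by
    obtain ⟨M, hM, hMf⟩ := Finset.exists_mem_eq_sup'
      (⟨∅, Finset.mem_erase.mpr ⟨hN.ne_empty.symm, Finset.empty_mem_powerset N⟩⟩ :
        (N.powerset.erase N).Nonempty)
      (fun M => (X - ∑ j ∈ M, x j) / ∑ j ∈ N \ M, φ j)
    have hS := hpos M hM
    have hMsub : M ⊆ N := Finset.mem_powerset.mp (Finset.mem_erase.mp hM).2
    have hfval : f = (X - ∑ j ∈ M, x j) / ∑ j ∈ N \ M, φ j := by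
      rw [hf, fairShare]; exact hMf
    by_cases hiM : i ∈ M
    · -- use M' = M.erase i
      have hM'mem : M.erase i ∈ (N.erase i).powerset :=
        Finset.mem_powerset.mpr (Finset.erase_subset_erase i hMsub)
      have hsum_x : ∑ j ∈ M.erase i, x j = (∑ j ∈ M, x j) - x i := by
        rw [Finset.sum_erase_eq_sub hiM]
      have hiNM : i ∉ N \ M := fun h => (Finset.mem_sdiff.mp h).2 hiM
      have hsdiff : N \ M.erase i = insert i (N \ M) := by
        ext j
        simp only [Finset.mem_sdiff, Finset.mem_erase, Finset.mem_insert]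
        constructor
        · rintro ⟨hjN, hj⟩
          by_cases hji : j = i
          · exact Or.inl hji
          · exact Or.inr ⟨hjN, fun hjM => hj ⟨hji, hjM⟩⟩
        · rintro (rfl | ⟨hjN, hjM⟩)
          · exact ⟨hi, fun h => h.1 rfl⟩
          · exact ⟨hjN, fun h => hjM h.2⟩
      have hsum_φ : ∑ j ∈ N \ M.erase i, φ j = φ i + ∑ j ∈ N \ M, φ j := by
        rw [hsdiff, Finset.sum_insert hiNM]
      have hkey : min (x i) (φ i * f) ≤
          (φ i / ∑ j ∈ N \ M.erase i, φ j) * (X - ∑ j ∈ M.erase i, x j) := by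
        have hfS : f * (∑ j ∈ N \ M, φ j) = X - ∑ j ∈ M, x j := by
          rw [hfval, div_mul_cancel₀ _ hS.ne']
        rw [hsum_φ, hsum_x, div_mul_eq_mul_div, le_div_iff₀ (by linarith)]
        have hm1 : min (x i) (φ i * f) ≤ x i := min_le_left _ _
        have hm2 : min (x i) (φ i * f) ≤ φ i * f := min_le_right _ _
        nlinarith [mul_le_mul_of_nonneg_right hm2 hS.le]
      exact hkey.trans (Finset.le_sup'
        (fun M => (φ i / ∑ j ∈ N \ M, φ j) * (X - ∑ j ∈ M, x j)) hM'mem)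
    · have hMmem : M ∈ (N.erase i).powerset :=
        Finset.mem_powerset.mpr (Finset.subset_erase.mpr ⟨hMsub, hiM⟩)
      have : φ i * f ≤ fi := by
        have : (φ i / ∑ j ∈ N \ M, φ j) * (X - ∑ j ∈ M, x j) ≤ fi :=
          Finset.le_sup' (fun M => (φ i / ∑ j ∈ N \ M, φ j) * (X - ∑ j ∈ M, x j)) hMmem
        rw [hfval]
        calc φ i * ((X - ∑ j ∈ M, x j) / ∑ j ∈ N \ M, φ j)
            = (φ i / ∑ j ∈ N \ M, φ j) * (X - ∑ j ∈ M, x j) := by ring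
          _ ≤ fi := this
      exact (min_le_right _ _).trans this
  exact le_antisymm (le_min (min_le_left _ _) h2) (le_min (min_le_left _ _)
    ((min_le_right _ _).trans h1))
end

section
/- Let N be a finite nonempty set with weights φ_j > 0, nonnegative requests x_j ≥ 0 for j ∈ N, and a resource X ≥ 0. Define the fair share f := max over proper subsets M ⊊ N of (X − Σ_{j∈M} x_j)/(Σ_{j∈N\M} φ_j). Then the allocation y_j := min{x_j, φ_j·f} is waste-free: Σ_{j∈N} y_j = min{ Σ_{j∈N} x_j, X }. -/
/-- The allocation `y_j := min {x_j, φ_j f}` determined by the fair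
share `f` is waste-free: `∑_{j∈N} y_j = min {∑_{j∈N} x_j, X}`. -/
theorem fairShare_allocation_waste_free {ι : Type*} [DecidableEq ι]
    (N : Finset ι) (hN : N.Nonempty) (φ x : ι → ℝ) (X : ℝ)
    (hφ : ∀ j ∈ N, 0 < φ j) (hx : ∀ j ∈ N, 0 ≤ x j) (hX : 0 ≤ X) :
    ∑ j ∈ N, min (x j) (φ j * fairShare N hN φ x X) = min (∑ j ∈ N, x j) X := by
  classical
  set f := fairShare N hN φ x X with hf
  have hSne : (N.powerset.erase N).Nonempty :=
    ⟨∅, Finset.mem_erase.mpr ⟨hN.ne_empty.symm, Finset.empty_mem_powerset N⟩⟩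
  have hfdef : f = (N.powerset.erase N).sup' hSne
      (fun M => (X - ∑ j ∈ M, x j) / ∑ j ∈ N \ M, φ j) := rfl
  have hmem : ∀ M ∈ N.powerset.erase N, M ⊆ N ∧ M ≠ N := by
    intro M hM
    obtain ⟨h1, h2⟩ := Finset.mem_erase.mp hM
    exact ⟨Finset.mem_powerset.mp h2, h1⟩
  have hden : ∀ M ∈ N.powerset.erase N, 0 < ∑ j ∈ N \ M, φ j := by
    intro M hM
    obtain ⟨hsub, hne⟩ := hmem M hM
    refine Finset.sum_pos (fun j hj => hφ j (Finset.mem_sdiff.mp hj).1) ?_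
    exact Finset.sdiff_nonempty.mpr (fun h => hne (le_antisymm hsub h))
  have hle : ∀ M ∈ N.powerset.erase N, X - ∑ j ∈ M, x j ≤ f * ∑ j ∈ N \ M, φ j := by
    intro M hM
    have h := Finset.le_sup' (f := fun M => (X - ∑ j ∈ M, x j) / ∑ j ∈ N \ M, φ j) hM
    rw [← hfdef, div_le_iff₀ (hden M hM)] at h
    linarith
  obtain ⟨M₀, hM₀, hfeq⟩ := Finset.exists_mem_eq_sup' hSne
      (fun M => (X - ∑ j ∈ M, x j) / ∑ j ∈ N \ M, φ j)
  rw [← hfdef] at hfeq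
  have hM₀sub := (hmem M₀ hM₀).1
  have heq : f * ∑ j ∈ N \ M₀, φ j = X - ∑ j ∈ M₀, x j := by
    rw [hfeq, div_mul_cancel₀ _ (hden M₀ hM₀).ne']
  -- upper bounds
  have hlex : ∑ j ∈ N, min (x j) (φ j * f) ≤ ∑ j ∈ N, x j :=
    Finset.sum_le_sum fun j _ => min_le_left _ _
  have hsplit : ∀ g : ι → ℝ, ∑ j ∈ N, g j = ∑ j ∈ M₀, g j + ∑ j ∈ N \ M₀, g j := by
    intro g
    rw [← Finset.sum_sdiff hM₀sub]; ring
  have hmuls : ∀ M : Finset ι, ∑ j ∈ M, φ j * f = f * ∑ j ∈ M, φ j := by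
    intro M
    rw [Finset.mul_sum]
    exact Finset.sum_congr rfl fun j _ => mul_comm _ _
  have hub : ∑ j ∈ N, min (x j) (φ j * f) ≤ X := by
    rw [hsplit]
    have h1 : ∑ j ∈ M₀, min (x j) (φ j * f) ≤ ∑ j ∈ M₀, x j :=
      Finset.sum_le_sum fun j _ => min_le_left _ _
    have h2 : ∑ j ∈ N \ M₀, min (x j) (φ j * f) ≤ ∑ j ∈ N \ M₀, φ j * f :=
      Finset.sum_le_sum fun j _ => min_le_right _ _
    have h3 := hmuls (N \ M₀)
    linarith
  by_cases hA : ∀ j ∈ N, x j ≤ φ j * f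
  · have hyx : ∑ j ∈ N, min (x j) (φ j * f) = ∑ j ∈ N, x j :=
      Finset.sum_congr rfl fun j hj => min_eq_left (hA j hj)
    have hxX : ∑ j ∈ N, x j ≤ X := by
      rw [hsplit]
      have h1 : ∑ j ∈ N \ M₀, x j ≤ ∑ j ∈ N \ M₀, φ j * f :=
        Finset.sum_le_sum fun j hj => hA j (Finset.mem_sdiff.mp hj).1
      have h3 := hmuls (N \ M₀)
      linarith
    rw [hyx, min_eq_left hxX]
  · push_neg at hA
    set A := N.filter (fun j => x j ≤ φ j * f) with hAdef
    have hAsub : A ⊆ N := Finset.filter_subset _ _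
    have hAS : A ∈ N.powerset.erase N := by
      refine Finset.mem_erase.mpr ⟨?_, Finset.mem_powerset.mpr hAsub⟩
      obtain ⟨j, hj, hjx⟩ := hA
      intro h
      have hjA : j ∈ A := h ▸ hj
      rw [hAdef, Finset.mem_filter] at hjA
      linarith [hjA.2]
    have hXle : X ≤ ∑ j ∈ N, min (x j) (φ j * f) := by
      have hsplitA : ∑ j ∈ N, min (x j) (φ j * f)
          = ∑ j ∈ A, min (x j) (φ j * f) + ∑ j ∈ N \ A, min (x j) (φ j * f) := by
        rw [← Finset.sum_sdiff hAsub]; ring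
      have h1 : ∑ j ∈ A, min (x j) (φ j * f) = ∑ j ∈ A, x j :=
        Finset.sum_congr rfl fun j hj => min_eq_left (Finset.mem_filter.mp hj).2
      have h2 : ∑ j ∈ N \ A, min (x j) (φ j * f) = ∑ j ∈ N \ A, φ j * f := by
        refine Finset.sum_congr rfl fun j hj => ?_
        obtain ⟨hjN, hjA⟩ := Finset.mem_sdiff.mp hj
        have : ¬ x j ≤ φ j * f := fun hc => hjA (Finset.mem_filter.mpr ⟨hjN, hc⟩)
        exact min_eq_right (le_of_not_ge this)
      have h3 := hmuls (N \ A)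
      have h4 := hle A hAS
      linarith
    exact le_antisymm (le_min hlex hub) ((min_le_right _ _).trans hXle)
end

section
/- Let N be a finite nonempty set with weights φ_j > 0, nonnegative requests x_j ≥ 0 for j ∈ N, and a resource X ≥ 0. Suppose (y_j)_{j∈N} and (y'_j)_{j∈N} both satisfy: (i) 0 ≤ y_j ≤ x_j for all j; (ii) Σ_{j∈N} y_j = min{Σ_{j∈N} x_j, X}; (iii) for every i ∈ N with y_i < x_i and every j ∈ N, y_i/φ_i ≥ y_j/φ_j; and the same three conditions for (y'_j). Then y_j = y'_j for all j ∈ N. -/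
/-- Key lemma: under the fairness hypotheses and equal sums, `y ≤ y'` on `N`. -/
lemma maxmin_aux {ι : Type*} (N : Finset ι)
    (φ x : ι → ℝ)
    (hφ : ∀ j ∈ N, 0 < φ j)
    (y y' : ι → ℝ)
    (hy_le : ∀ j ∈ N, 0 ≤ y j ∧ y j ≤ x j)
    (hy_fair : ∀ i ∈ N, y i < x i → ∀ j ∈ N, y j / φ j ≤ y i / φ i)
    (hy'_le : ∀ j ∈ N, 0 ≤ y' j ∧ y' j ≤ x j)
    (hy'_fair : ∀ i ∈ N, y' i < x i → ∀ j ∈ N, y' j / φ j ≤ y' i / φ i)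
    (hsum : ∑ j ∈ N, y j = ∑ j ∈ N, y' j) :
    ∀ j ∈ N, y j ≤ y' j := by
  by_contra h
  push_neg at h
  obtain ⟨i, hiN, hi⟩ := h
  have key : ∀ j ∈ N, y' j ≤ y j := by
    intro j hjN
    by_contra hj
    push_neg at hj
    have hxj : y j < x j := lt_of_lt_of_le hj (hy'_le j hjN).2
    have hxi : y' i < x i := lt_of_lt_of_le hi (hy_le i hiN).2
    have h1 : y' j / φ j ≤ y' i / φ i := hy'_fair i hiN hxi j hjN
    have h2 : y i / φ i ≤ y j / φ j := hy_fair j hjN hxj i hiN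
    have h3 : y' i / φ i < y i / φ i := (div_lt_div_iff_of_pos_right (hφ i hiN)).mpr hi
    have h4 : y j / φ j < y' j / φ j := (div_lt_div_iff_of_pos_right (hφ j hjN)).mpr hj
    linarith
  have hlt : ∑ j ∈ N, y' j < ∑ j ∈ N, y j :=
    Finset.sum_lt_sum key ⟨i, hiN, hi⟩
  linarith

/-- A max-min fair allocation is uniquely determined: if `(y_j)` and
`(y'_j)` both satisfy (i) `0 ≤ y_j ≤ x_j`, (ii) waste-freeness
`∑_j y_j = min {∑_j x_j, X}`, and (iii) `y_i / φ_i ≥ y_j / φ_j` whenever `y_i < x_i`,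
then `y = y'` on `N`. -/
theorem maxmin_fair_allocation_unique {ι : Type*} (N : Finset ι) (hN : N.Nonempty)
    (φ x : ι → ℝ) (X : ℝ)
    (hφ : ∀ j ∈ N, 0 < φ j) (hx : ∀ j ∈ N, 0 ≤ x j) (hX : 0 ≤ X)
    (y y' : ι → ℝ)
    (hy_le : ∀ j ∈ N, 0 ≤ y j ∧ y j ≤ x j)
    (hy_wf : ∑ j ∈ N, y j = min (∑ j ∈ N, x j) X)
    (hy_fair : ∀ i ∈ N, y i < x i → ∀ j ∈ N, y j / φ j ≤ y i / φ i)
    (hy'_le : ∀ j ∈ N, 0 ≤ y' j ∧ y' j ≤ x j)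
    (hy'_wf : ∑ j ∈ N, y' j = min (∑ j ∈ N, x j) X)
    (hy'_fair : ∀ i ∈ N, y' i < x i → ∀ j ∈ N, y' j / φ j ≤ y' i / φ i) :
    ∀ j ∈ N, y j = y' j := by
  have hsum : ∑ j ∈ N, y j = ∑ j ∈ N, y' j := by rw [hy_wf, hy'_wf]
  have h1 := maxmin_aux N φ x hφ y y' hy_le hy_fair hy'_le hy'_fair hsum
  have h2 := maxmin_aux N φ x hφ y' y hy'_le hy'_fair hy_le hy_fair hsum.symm
  exact fun j hj => le_antisymm (h1 j hj) (h2 j hj)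
end

section
/- Let N be a finite nonempty set with weights φ_j > 0, nonnegative requests x_j ≥ 0 for j ∈ N, and a resource X ≥ 0 with Σ_{j∈N} x_j > X. Define the fair share f := max over proper subsets M ⊊ N of (X − Σ_{j∈M} x_j)/(Σ_{j∈N\M} φ_j), and the satisfied set M_sat := { j ∈ N : x_j ≤ φ_j·f }. Then M_sat is a proper subset of N and the maximum defining f is attained at M_sat, i.e., f = (X − Σ_{j∈M_sat} x_j)/(Σ_{j∈N\M_sat} φ_j). -/
open scoped Classical

/-- If `∑_{j∈N} x_j > X`, then the satisfied set
`M_sat := {j ∈ N : x_j ≤ φ_j f}` is a proper subset of `N`, and the maximum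
defining the fair share `f` is attained at `M_sat`. -/
theorem fairShare_attained_at_satisfied_set {ι : Type*} [DecidableEq ι]
    (N : Finset ι) (hN : N.Nonempty) (φ x : ι → ℝ) (X : ℝ)
    (hφ : ∀ j ∈ N, 0 < φ j) (hx : ∀ j ∈ N, 0 ≤ x j) (hX : 0 ≤ X)
    (hsum : X < ∑ j ∈ N, x j) :
    N.filter (fun j => x j ≤ φ j * fairShare N hN φ x X) ⊂ N ∧
      fairShare N hN φ x X =
        (X - ∑ j ∈ N.filter (fun j => x j ≤ φ j * fairShare N hN φ x X), x j) /
          ∑ j ∈ N \ N.filter (fun j => x j ≤ φ j * fairShare N hN φ x X), φ j := by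
  classical
  set f := fairShare N hN φ x X with hf
  set g : Finset ι → ℝ := fun M => (X - ∑ j ∈ M, x j) / ∑ j ∈ N \ M, φ j with hg
  set Msat := N.filter (fun j => x j ≤ φ j * f) with hMsatdef
  have hne : (N.powerset.erase N).Nonempty :=
    ⟨∅, Finset.mem_erase.mpr ⟨hN.ne_empty.symm, Finset.empty_mem_powerset N⟩⟩
  have hfsup : f = (N.powerset.erase N).sup' hne g := rfl
  have hmem_iff : ∀ M : Finset ι, M ∈ N.powerset.erase N ↔ M ⊆ N ∧ M ≠ N := by
    intro M
    rw [Finset.mem_erase, Finset.mem_powerset]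
    tauto
  have hpos : ∀ M : Finset ι, M ⊆ N → M ≠ N → 0 < ∑ j ∈ N \ M, φ j := by
    intro M hsub hneN
    have hnonempty : (N \ M).Nonempty := by
      rw [Finset.sdiff_nonempty]
      intro h
      exact hneN (Finset.Subset.antisymm hsub h)
    exact Finset.sum_pos (fun j hj => hφ j (Finset.mem_sdiff.mp hj).1) hnonempty
  obtain ⟨M₀, hM₀mem, hM₀⟩ := Finset.exists_mem_eq_sup' hne g
  obtain ⟨hM₀sub, hM₀ne⟩ := (hmem_iff M₀).mp hM₀mem
  have hD₀ : 0 < ∑ j ∈ N \ M₀, φ j := hpos _ hM₀sub hM₀ne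
  have hf0 : f = g M₀ := hfsup.trans hM₀
  have hfM₀ : f * ∑ j ∈ N \ M₀, φ j = X - ∑ j ∈ M₀, x j := by
    rw [hf0, hg]
    exact div_mul_cancel₀ _ hD₀.ne'
  -- Properness of Msat
  have hMsat_sub : Msat ⊆ N := Finset.filter_subset _ _
  have hMsat_ne : Msat ≠ N := by
    intro hcontra
    have hall : ∀ j ∈ N, x j ≤ φ j * f := by
      intro j hj
      have : j ∈ Msat := hcontra ▸ hj
      exact (Finset.mem_filter.mp this).2
    have h1 : ∑ j ∈ N \ M₀, x j ≤ ∑ j ∈ N \ M₀, φ j * f :=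
      Finset.sum_le_sum fun j hj => hall j (Finset.mem_sdiff.mp hj).1
    have h2 : ∑ j ∈ N \ M₀, φ j * f = f * ∑ j ∈ N \ M₀, φ j := by
      rw [Finset.mul_sum]
      exact Finset.sum_congr rfl fun j _ => by ring
    have h3 : ∑ j ∈ N, x j ≤ X := by
      have := Finset.sum_sdiff hM₀sub (f := x)
      calc ∑ j ∈ N, x j = ∑ j ∈ N \ M₀, x j + ∑ j ∈ M₀, x j := this.symm
        _ ≤ f * ∑ j ∈ N \ M₀, φ j + ∑ j ∈ M₀, x j := by
            rw [← h2] at *; linarith [h1]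
        _ = X := by rw [hfM₀]; ring
    linarith
  have hMsat_mem : Msat ∈ N.powerset.erase N := (hmem_iff Msat).mpr ⟨hMsat_sub, hMsat_ne⟩
  have hDsat : 0 < ∑ j ∈ N \ Msat, φ j := hpos _ hMsat_sub hMsat_ne
  -- g Msat ≤ f
  have hle : g Msat ≤ f := by
    rw [hfsup]
    exact Finset.le_sup' g hMsat_mem
  -- key: h(Msat) = ∑_N min(x j, φ j f)
  have hminsum : ∑ j ∈ Msat, x j + ∑ j ∈ N \ Msat, φ j * f
      = ∑ j ∈ N, min (x j) (φ j * f) := by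
    have hsplit := Finset.sum_filter_add_sum_filter_not N (fun j => x j ≤ φ j * f)
      (fun j => min (x j) (φ j * f))
    have hcomp : N \ Msat = N.filter (fun j => ¬ x j ≤ φ j * f) := by
      rw [hMsatdef, Finset.filter_not]
    rw [hcomp, ← hsplit]
    congr 1
    · exact Finset.sum_congr rfl fun j hj => (min_eq_left (Finset.mem_filter.mp hj).2).symm
    · exact Finset.sum_congr rfl fun j hj =>
        (min_eq_right (le_of_not_ge (Finset.mem_filter.mp hj).2)).symm
  -- ∑_N min ≤ X
  have hminle : ∑ j ∈ N, min (x j) (φ j * f) ≤ X := by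
    have hsplit := Finset.sum_sdiff hM₀sub (f := fun j => min (x j) (φ j * f))
    have h1 : ∑ j ∈ N \ M₀, min (x j) (φ j * f) ≤ ∑ j ∈ N \ M₀, φ j * f :=
      Finset.sum_le_sum fun j _ => min_le_right _ _
    have h2 : ∑ j ∈ M₀, min (x j) (φ j * f) ≤ ∑ j ∈ M₀, x j :=
      Finset.sum_le_sum fun j _ => min_le_left _ _
    have h3 : ∑ j ∈ N \ M₀, φ j * f = f * ∑ j ∈ N \ M₀, φ j := by
      rw [Finset.mul_sum]
      exact Finset.sum_congr rfl fun j _ => by ring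
    calc ∑ j ∈ N, min (x j) (φ j * f)
        = ∑ j ∈ N \ M₀, min (x j) (φ j * f) + ∑ j ∈ M₀, min (x j) (φ j * f) := hsplit.symm
      _ ≤ f * ∑ j ∈ N \ M₀, φ j + ∑ j ∈ M₀, x j := by rw [← h3]; linarith
      _ = X := by rw [hfM₀]; ring
  -- f ≤ g Msat
  have hge : f ≤ g Msat := by
    rw [hg]
    rw [le_div_iff₀ hDsat]
    have h3 : ∑ j ∈ N \ Msat, φ j * f = f * ∑ j ∈ N \ Msat, φ j := by
      rw [Finset.mul_sum]
      exact Finset.sum_congr rfl fun j _ => by ring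
    nlinarith [hminsum, hminle]
  refine ⟨Finset.ssubset_iff_subset_ne.mpr ⟨hMsat_sub, hMsat_ne⟩, le_antisymm hge hle⟩
end

section
/- Let N be a finite nonempty set with weights φ_j > 0 and a resource X ≥ 0. Let M ⊆ N and let (x_j)_{j∈M} be nonnegative requests that are feasible for X, i.e., for every k ∈ M: (x_k/φ_k)·Σ_{j∈N\M} φ_j ≤ X − Σ_{j∈M} x_j. Then for every choice of nonnegative requests (x_j)_{j∈N\M} for the remaining players, the fair share f := max over proper subsets M' ⊊ N of (X − Σ_{j∈M'} x_j)/(Σ_{j∈N\M'} φ_j) computed from the full set of requests satisfies x_k ≤ φ_k·f for every k ∈ M; that is, M is contained in the satisfied set M_sat := { j ∈ N : x_j ≤ φ_j·f } regardless of the requests of players outside M. -/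
/-- If the requests `(x_j)_{j∈M}` are feasible for the resource `X`,
then, regardless of the (nonnegative) requests of the players outside `M`, every
player of `M` is satisfied in the max-min fair allocation: `x_k ≤ φ_k f` for all
`k ∈ M`, i.e. `M ⊆ M_sat`. -/
theorem feasible_subset_subset_satisfied {ι : Type*} [DecidableEq ι]
    (N : Finset ι) (hN : N.Nonempty) (φ : ι → ℝ) (X : ℝ)
    (hφ : ∀ j ∈ N, 0 < φ j) (hX : 0 ≤ X)
    (M : Finset ι) (hM : M ⊆ N) :
    ∀ x : ι → ℝ, (∀ j ∈ N, 0 ≤ x j) →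
      (∀ k ∈ M, (x k / φ k) * ∑ j ∈ N \ M, φ j ≤ X - ∑ j ∈ M, x j) →
      ∀ k ∈ M, x k ≤ φ k * fairShare N hN φ x X := by
  intro x hx hfeas k hk
  have hkN : k ∈ N := hM hk
  have hφk : 0 < φ k := hφ k hkN
  set M' := M.erase k with hM'
  have hM'N : M' ⊆ N := (Finset.erase_subset k M).trans hM
  have hmem : M' ∈ N.powerset.erase N := by
    refine Finset.mem_erase.mpr ⟨?_, Finset.mem_powerset.mpr hM'N⟩
    intro h
    have : k ∈ M' := h ▸ hkN
    exact (Finset.notMem_erase k M) this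
  have hsetsum : ∑ j ∈ M, x j = x k + ∑ j ∈ M', x j := by
    rw [hM', Finset.add_sum_erase M x hk]
  have hsd : N \ M' = insert k (N \ M) := by
    ext j
    simp only [Finset.mem_sdiff, Finset.mem_erase, Finset.mem_insert, hM']
    constructor
    · rintro ⟨hjN, hj⟩
      by_cases hjk : j = k
      · exact Or.inl hjk
      · exact Or.inr ⟨hjN, fun hjM => hj ⟨hjk, hjM⟩⟩
    · rintro (rfl | ⟨hjN, hj⟩)
      · exact ⟨hkN, fun h => h.1 rfl⟩
      · exact ⟨hjN, fun h => hj h.2⟩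
  have hknotin : k ∉ N \ M := by simp [hk]
  have hφsum : ∑ j ∈ N \ M', φ j = φ k + ∑ j ∈ N \ M, φ j := by
    rw [hsd, Finset.sum_insert hknotin]
  set S := ∑ j ∈ N \ M, φ j with hS
  have hS0 : 0 ≤ S := Finset.sum_nonneg fun j hj =>
    (hφ j (Finset.mem_sdiff.mp hj).1).le
  have hD : 0 < φ k + S := by linarith
  -- feasibility rearranged
  have hfeas' : x k * S ≤ φ k * (X - ∑ j ∈ M, x j) := by
    have h := hfeas k hk
    have h2 : (x k / φ k) * S * φ k ≤ (X - ∑ j ∈ M, x j) * φ k :=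
      mul_le_mul_of_nonneg_right h hφk.le
    have h3 : (x k / φ k) * S * φ k = x k * S := by
      field_simp
    linarith [h2, h3 ▸ h2]
  have hratio : x k ≤ φ k * ((X - ∑ j ∈ M', x j) / ∑ j ∈ N \ M', φ j) := by
    rw [hφsum, mul_div_assoc' , le_div_iff₀ hD]
    have : X - ∑ j ∈ M', x j = (X - ∑ j ∈ M, x j) + x k := by
      rw [hsetsum]; ring
    rw [this]
    nlinarith [hfeas']
  have hle : (X - ∑ j ∈ M', x j) / ∑ j ∈ N \ M', φ j ≤ fairShare N hN φ x X :=
    by rw [fairShare]; exact Finset.le_sup' (fun M => (X - ∑ j ∈ M, x j) / ∑ j ∈ N \ M, φ j) hmem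
  calc x k ≤ φ k * ((X - ∑ j ∈ M', x j) / ∑ j ∈ N \ M', φ j) := hratio
    _ ≤ φ k * fairShare N hN φ x X := mul_le_mul_of_nonneg_left hle hφk.le
end

section
/- Let N be a finite nonempty set with weights φ_j > 0 and a resource X > 0. Let M ⊆ N be nonempty and let (x_j)_{j∈M} be nonnegative requests that are feasible for X, i.e., for every k ∈ M: (x_k/φ_k)·Σ_{j∈N\M} φ_j ≤ X − Σ_{j∈M} x_j. If k ∈ M satisfies x_k/φ_k = max_{j∈M} x_j/φ_j, then the requests (x_j)_{j∈M\{k}} are feasible for X, i.e., for every m ∈ M\{k}: (x_m/φ_m)·Σ_{j∈N\(M\{k})} φ_j ≤ X − Σ_{j∈M\{k}} x_j. -/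
/-- **chain lemma.** If the requests `(x_j)_{j∈M}` are feasible for the
resource `X > 0` and `k ∈ M` maximizes the ratio `x_j / φ_j` over `M`, then
`(x_j)_{j∈M\{k}}` is also feasible for `X`. -/
theorem feasible_erase_max {ι : Type*} [DecidableEq ι]
    (N : Finset ι) (hN : N.Nonempty) (φ x : ι → ℝ) (X : ℝ)
    (hφ : ∀ j ∈ N, 0 < φ j) (hX : 0 < X)
    (M : Finset ι) (hM : M ⊆ N) (hMne : M.Nonempty)
    (hx : ∀ j ∈ M, 0 ≤ x j)
    (hfeas : ∀ k ∈ M, (x k / φ k) * ∑ j ∈ N \ M, φ j ≤ X - ∑ j ∈ M, x j)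
    (k : ι) (hk : k ∈ M) (hkmax : ∀ j ∈ M, x j / φ j ≤ x k / φ k) :
    ∀ m ∈ M.erase k,
      (x m / φ m) * ∑ j ∈ N \ M.erase k, φ j ≤ X - ∑ j ∈ M.erase k, x j := by
  intro m hm
  have hmM : m ∈ M := Finset.mem_of_mem_erase hm
  have hkN : k ∈ N := hM hk
  have hS : (0:ℝ) ≤ ∑ j ∈ N \ M, φ j :=
    Finset.sum_nonneg fun j hj => (hφ j (Finset.mem_sdiff.mp hj).1).le
  have hφk : 0 < φ k := hφ k hkN
  have hset : N \ M.erase k = insert k (N \ M) := by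
    ext j
    simp only [Finset.mem_sdiff, Finset.mem_erase, Finset.mem_insert, not_and]
    constructor
    · rintro ⟨hjN, h⟩
      by_cases hjk : j = k
      · exact Or.inl hjk
      · exact Or.inr ⟨hjN, fun hjM => hjk (by tauto)⟩
    · rintro (rfl | ⟨hjN, hjM⟩)
      · exact ⟨hkN, fun h => absurd rfl h⟩
      · exact ⟨hjN, fun _ hjM2 => absurd hjM2 hjM⟩
  have hknot : k ∉ N \ M := by simp [hk]
  have hsum : ∑ j ∈ N \ M.erase k, φ j = φ k + ∑ j ∈ N \ M, φ j := by
    rw [hset, Finset.sum_insert hknot]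
  have hxsum : ∑ j ∈ M.erase k, x j = (∑ j ∈ M, x j) - x k := by
    rw [← Finset.add_sum_erase M x hk]; ring
  have hratio : x m / φ m ≤ x k / φ k := hkmax m hmM
  have h1 : (x m / φ m) * ∑ j ∈ N \ M, φ j ≤ X - ∑ j ∈ M, x j :=
    le_trans (mul_le_mul_of_nonneg_right hratio hS) (hfeas k hk)
  have h2 : (x m / φ m) * φ k ≤ x k := by
    calc (x m / φ m) * φ k ≤ (x k / φ k) * φ k :=
          mul_le_mul_of_nonneg_right hratio hφk.le
      _ = x k := div_mul_cancel₀ _ hφk.ne'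
  rw [hsum, hxsum, mul_add]
  linarith
end

section
/- Let N be a finite nonempty set with weights φ_j > 0. For nonnegative requests (x_j)_{j∈N} and resource X ≥ 0, define the fair share f := max over proper subsets M ⊊ N of (X − Σ_{j∈M} x_j)/(Σ_{j∈N\M} φ_j) and the unmet demand ȳ_j := max{x_j − φ_j·f, 0}; analogously define ȳ'_j from requests (x'_j)_{j∈N} and resource X' ≥ 0. If x_j ≤ x'_j for all j ∈ N and X ≥ X', then ȳ_j ≤ ȳ'_j for all j ∈ N. -/
/-- **monotonicity of unmet demand.** If `x_j ≤ x'_j` for all `j ∈ N`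
and `X ≥ X'`, then the unmet demands `ȳ_j := [x_j - φ_j f]₊` satisfy `ȳ_j ≤ ȳ'_j`
for all `j ∈ N`. -/
theorem unmet_demand_monotone {ι : Type*} [DecidableEq ι]
    (N : Finset ι) (hN : N.Nonempty) (φ : ι → ℝ)
    (hφ : ∀ j ∈ N, 0 < φ j)
    (x x' : ι → ℝ) (X X' : ℝ)
    (hx : ∀ j ∈ N, 0 ≤ x j) (hx' : ∀ j ∈ N, 0 ≤ x' j)
    (hX : 0 ≤ X) (hX' : 0 ≤ X')
    (hxx' : ∀ j ∈ N, x j ≤ x' j) (hXX' : X' ≤ X) :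
    ∀ j ∈ N,
      max (x j - φ j * fairShare N hN φ x X) 0 ≤
        max (x' j - φ j * fairShare N hN φ x' X') 0 := by
  have hf : fairShare N hN φ x' X' ≤ fairShare N hN φ x X := by
    apply Finset.sup'_le
    intro M hM
    refine le_trans ?_ (Finset.le_sup' _ hM)
    rw [Finset.mem_erase, Finset.mem_powerset] at hM
    obtain ⟨hMne, hMN⟩ := hM
    have hden : 0 < ∑ j ∈ N \ M, φ j := by
      apply Finset.sum_pos
      · intro j hj; exact hφ j (Finset.mem_sdiff.mp hj).1
      · rw [Finset.sdiff_nonempty]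
        exact fun h => hMne (le_antisymm hMN h)
    apply div_le_div_of_nonneg_right ?_ hden.le
    have : ∑ j ∈ M, x j ≤ ∑ j ∈ M, x' j :=
      Finset.sum_le_sum fun j hj => hxx' j (hMN hj)
    linarith
  intro j hj
  have : x j - φ j * fairShare N hN φ x X ≤ x' j - φ j * fairShare N hN φ x' X' := by
    have := mul_le_mul_of_nonneg_left hf (le_of_lt (hφ j hj))
    have := hxx' j hj
    linarith
  exact max_le_max this le_rfl
end

section
/- Let N be a finite nonempty set with weights φ_j > 0. For nonnegative requests (x_j)_{j∈N} and resource X ≥ 0, define the fair share f := max over proper subsets M ⊊ N of (X − Σ_{j∈M} x_j)/(Σ_{j∈N\M} φ_j) and the unmet demand ȳ_j := max{x_j − φ_j·f, 0}; analogously define ȳ'_j from requests (x'_j)_{j∈N} and resource X' ≥ 0. Then Σ_{j∈N} |ȳ_j − ȳ'_j| ≤ Σ_{j∈N} |x_j − x'_j| + |X − X'|. -/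
/-!
The total unmet demand equals `max (∑ j ∈ N, x j - X) 0`. For `≥`, a proper subset `M` attaining
the fair share `f` satisfies `f * ∑ j ∈ N \ M, φ j = X - ∑ j ∈ M, x j`, so the terms
`x j - φ j * f` over `N \ M` alone already add up to `∑ j ∈ N, x j - X`. For `≤`, the players with
positive unmet demand are the complement of a proper subset, and `f` dominates that subset's
quotient. Moreover `f` decreases in the requests and increases in the resource, so unmet demand is
monotone in `(x, -X)`. A monotone map whose total is `1`-Lipschitz is an `ℓ¹`-contraction
(Crandall–Tartar): compare both inputs with their join `(max x x', min X X')`.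
-/

theorem Finset.sum_max_zero_eq_sum_filter_pos {ι α : Type*} [AddCommGroup α] [LinearOrder α]
    [IsOrderedAddMonoid α] (s : Finset ι) (a : ι → α) :
    ∑ j ∈ s, max (a j) 0 = ∑ j ∈ s with 0 < a j, a j := by
  rw [← Finset.sum_filter_add_sum_filter_not s (fun j => 0 < a j)]
  have hneg : ∑ j ∈ s with ¬0 < a j, max (a j) 0 = 0 :=
    Finset.sum_eq_zero fun j hj => max_eq_right (not_lt.1 (Finset.mem_filter.1 hj).2)
  rw [hneg, add_zero]
  exact Finset.sum_congr rfl fun j hj => max_eq_left (Finset.mem_filter.1 hj).2.le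

theorem max_sub_add_max_sub {α : Type*} [AddCommGroup α] [LinearOrder α] [IsOrderedAddMonoid α]
    (a b : α) : (max a b - a) + (max a b - b) = |a - b| := by
  rcases le_total a b with h | h
  · rw [max_eq_right h, abs_sub_comm, abs_of_nonneg (sub_nonneg.2 h)]; abel
  · rw [max_eq_left h, abs_of_nonneg (sub_nonneg.2 h)]; abel

theorem sub_min_add_sub_min {α : Type*} [AddCommGroup α] [LinearOrder α] [IsOrderedAddMonoid α]
    (a b : α) : (a - min a b) + (b - min a b) = |a - b| := by
  rcases le_total a b with h | h
  · rw [min_eq_left h, abs_sub_comm, abs_of_nonneg (sub_nonneg.2 h)]; abel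
  · rw [min_eq_right h, abs_of_nonneg (sub_nonneg.2 h)]; abel

noncomputable def unmetDemand {ι : Type*} [DecidableEq ι] (N : Finset ι) (hN : N.Nonempty)
    (φ x : ι → ℝ) (X : ℝ) (j : ι) : ℝ :=
  max (x j - φ j * fairShare N hN φ x X) 0

section FairShare

variable {ι : Type*} [DecidableEq ι] {N : Finset ι} (hN : N.Nonempty) {φ : ι → ℝ}
  {x x' : ι → ℝ} {X X' : ℝ}

theorem div_le_fairShare {M : Finset ι} (hM : M ⊂ N) :
    (X - ∑ j ∈ M, x j) / ∑ j ∈ N \ M, φ j ≤ fairShare N hN φ x X :=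
  Finset.le_sup' (fun M => (X - ∑ j ∈ M, x j) / ∑ j ∈ N \ M, φ j) (Finset.mem_ssubsets.2 hM)

theorem exists_fairShare_eq :
    ∃ M ⊂ N, fairShare N hN φ x X = (X - ∑ j ∈ M, x j) / ∑ j ∈ N \ M, φ j := by
  obtain ⟨M, hM, hf⟩ :=
    Finset.exists_mem_eq_sup' _ (fun M => (X - ∑ j ∈ M, x j) / ∑ j ∈ N \ M, φ j)
  exact ⟨M, Finset.mem_ssubsets.1 hM, hf⟩

theorem fairShare_le_fairShare (hφ : ∀ j ∈ N, 0 ≤ φ j) (hx : ∀ j ∈ N, x' j ≤ x j)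
    (hX : X ≤ X') : fairShare N hN φ x X ≤ fairShare N hN φ x' X' :=
  Finset.sup'_mono_fun fun M hM =>
    have hMN := (Finset.mem_ssubsets.1 hM).subset
    div_le_div_of_nonneg_right
      (by linarith [Finset.sum_le_sum fun j hj => hx j (hMN hj)])
      (Finset.sum_nonneg fun j hj => hφ j (Finset.sdiff_subset hj))

theorem sum_sdiff_pos_of_ssubset (hφ : ∀ j ∈ N, 0 < φ j) {M : Finset ι} (hM : M ⊂ N) :
    0 < ∑ j ∈ N \ M, φ j :=
  Finset.sum_pos (fun j hj => hφ j (Finset.sdiff_subset hj))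
    (Finset.sdiff_nonempty.2 hM.2)

theorem sub_le_sum_unmetDemand (hφ : ∀ j ∈ N, 0 < φ j) :
    ∑ j ∈ N, x j - X ≤ ∑ j ∈ N, unmetDemand N hN φ x X j := by
  obtain ⟨M, hMN, hf⟩ := exists_fairShare_eq hN (φ := φ) (x := x) (X := X)
  have hD := sum_sdiff_pos_of_ssubset hφ hMN
  calc ∑ j ∈ N, x j - X = ∑ j ∈ N \ M, (x j - φ j * fairShare N hN φ x X) := by
        rw [Finset.sum_sub_distrib, ← Finset.sum_mul, hf, mul_div_cancel₀ _ hD.ne',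
          ← Finset.sum_sdiff hMN.subset]
        ring
    _ ≤ ∑ j ∈ N \ M, unmetDemand N hN φ x X j :=
        Finset.sum_le_sum fun _ _ => le_max_left _ _
    _ ≤ ∑ j ∈ N, unmetDemand N hN φ x X j :=
        Finset.sum_le_sum_of_subset_of_nonneg Finset.sdiff_subset fun _ _ _ => le_max_right _ _

theorem sum_unmetDemand_le (hφ : ∀ j ∈ N, 0 < φ j) :
    ∑ j ∈ N, unmetDemand N hN φ x X j ≤ max (∑ j ∈ N, x j - X) 0 := by
  set f := fairShare N hN φ x X
  set P := N.filter fun j => 0 < x j - φ j * f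
  rw [show ∑ j ∈ N, unmetDemand N hN φ x X j = ∑ j ∈ P, (x j - φ j * f) from
    Finset.sum_max_zero_eq_sum_filter_pos N _]
  rcases P.eq_empty_or_nonempty with hP | hP
  · rw [hP, Finset.sum_empty]
    exact le_max_right _ _
  have hPN : P ⊆ N := Finset.filter_subset _ N
  have hM : N \ P ⊂ N := Finset.sdiff_ssubset hPN hP
  have hD := sum_sdiff_pos_of_ssubset hφ hM
  have hf := div_le_fairShare hN (φ := φ) (x := x) (X := X) hM
  rw [Finset.sdiff_sdiff_eq_self hPN] at hD hf
  rw [div_le_iff₀ hD] at hf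
  calc ∑ j ∈ P, (x j - φ j * f) = ∑ j ∈ P, x j - (∑ j ∈ P, φ j) * f := by
        rw [Finset.sum_sub_distrib, Finset.sum_mul]
    _ ≤ ∑ j ∈ N, x j - X := by linarith [Finset.sum_sdiff hPN (f := x)]
    _ ≤ max (∑ j ∈ N, x j - X) 0 := le_max_left _ _

theorem sum_unmetDemand (hφ : ∀ j ∈ N, 0 < φ j) :
    ∑ j ∈ N, unmetDemand N hN φ x X j = max (∑ j ∈ N, x j - X) 0 :=
  (sum_unmetDemand_le hN hφ).antisymm
    (max_le (sub_le_sum_unmetDemand hN hφ) (Finset.sum_nonneg fun _ _ => le_max_right _ _))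

theorem unmetDemand_le_unmetDemand (hφ : ∀ j ∈ N, 0 ≤ φ j) (hx : ∀ j ∈ N, x j ≤ x' j)
    (hX : X' ≤ X) : ∀ j ∈ N, unmetDemand N hN φ x X j ≤ unmetDemand N hN φ x' X' j :=
  fun j hj => max_le_max (sub_le_sub (hx j hj)
    (mul_le_mul_of_nonneg_left (fairShare_le_fairShare hN hφ hx hX) (hφ j hj))) le_rfl

theorem sum_unmetDemand_sub_le (hφ : ∀ j ∈ N, 0 < φ j) (hx : ∀ j ∈ N, x j ≤ x' j)
    (hX : X' ≤ X) :
    ∑ j ∈ N, (unmetDemand N hN φ x' X' j - unmetDemand N hN φ x X j) ≤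
      ∑ j ∈ N, (x' j - x j) + (X - X') := by
  rw [Finset.sum_sub_distrib, sum_unmetDemand hN hφ, sum_unmetDemand hN hφ,
    Finset.sum_sub_distrib]
  have hsum : ∑ j ∈ N, x j ≤ ∑ j ∈ N, x' j := Finset.sum_le_sum hx
  have h := (le_abs_self _).trans
    (abs_max_sub_max_le_abs (∑ j ∈ N, x' j - X') (∑ j ∈ N, x j - X) 0)
  rw [abs_of_nonneg (by linarith : 0 ≤ ∑ j ∈ N, x' j - X' - (∑ j ∈ N, x j - X))] at h
  linarith

end FairShare

theorem unmet_demand_contraction_general {ι : Type*} [DecidableEq ι]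
    (N : Finset ι) (hN : N.Nonempty) (φ : ι → ℝ)
    (hφ : ∀ j ∈ N, 0 < φ j)
    (x x' : ι → ℝ) (X X' : ℝ) :
    ∑ j ∈ N,
        |max (x j - φ j * fairShare N hN φ x X) 0 -
          max (x' j - φ j * fairShare N hN φ x' X') 0| ≤
      (∑ j ∈ N, |x j - x' j|) + |X - X'| := by
  change ∑ j ∈ N, |unmetDemand N hN φ x X j - unmetDemand N hN φ x' X' j| ≤ _
  set y := unmetDemand N hN φ x X
  set y' := unmetDemand N hN φ x' X'
  set ym := unmetDemand N hN φ (fun j => max (x j) (x' j)) (min X X')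
  have hφ₀ : ∀ j ∈ N, 0 ≤ φ j := fun j hj => (hφ j hj).le
  have hy : ∀ j ∈ N, y j ≤ ym j :=
    unmetDemand_le_unmetDemand hN hφ₀ (fun j _ => le_max_left (x j) (x' j)) (min_le_left X X')
  have hy' : ∀ j ∈ N, y' j ≤ ym j :=
    unmetDemand_le_unmetDemand hN hφ₀ (fun j _ => le_max_right (x j) (x' j)) (min_le_right X X')
  calc ∑ j ∈ N, |y j - y' j| ≤ ∑ j ∈ N, ((ym j - y j) + (ym j - y' j)) :=
        Finset.sum_le_sum fun j hj =>
          abs_sub_le_iff.2 ⟨by linarith [hy j hj], by linarith [hy' j hj]⟩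
    _ = ∑ j ∈ N, (ym j - y j) + ∑ j ∈ N, (ym j - y' j) := Finset.sum_add_distrib
    _ ≤ (∑ j ∈ N, (max (x j) (x' j) - x j) + (X - min X X')) +
          (∑ j ∈ N, (max (x j) (x' j) - x' j) + (X' - min X X')) :=
        add_le_add
          (sum_unmetDemand_sub_le hN hφ (fun j _ => le_max_left _ _) (min_le_left _ _))
          (sum_unmetDemand_sub_le hN hφ (fun j _ => le_max_right _ _) (min_le_right _ _))
    _ = ∑ j ∈ N, |x j - x' j| + |X - X'| := by
        rw [← sub_min_add_sub_min,
          ← Finset.sum_congr rfl fun j _ => max_sub_add_max_sub (x j) (x' j),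
          Finset.sum_add_distrib]
        ring

/-- **ℓ¹-contraction of unmet demand.** The unmet demands
`ȳ_j := [x_j - φ_j f]₊` satisfy
`∑_{j∈N} |ȳ_j - ȳ'_j| ≤ ∑_{j∈N} |x_j - x'_j| + |X - X'|`. -/
theorem unmet_demand_contraction {ι : Type*} [DecidableEq ι]
    (N : Finset ι) (hN : N.Nonempty) (φ : ι → ℝ)
    (hφ : ∀ j ∈ N, 0 < φ j)
    (x x' : ι → ℝ) (X X' : ℝ)
    (hx : ∀ j ∈ N, 0 ≤ x j) (hx' : ∀ j ∈ N, 0 ≤ x' j)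
    (hX : 0 ≤ X) (hX' : 0 ≤ X') :
    ∑ j ∈ N,
        |max (x j - φ j * fairShare N hN φ x X) 0 -
          max (x' j - φ j * fairShare N hN φ x' X') 0| ≤
      (∑ j ∈ N, |x j - x' j|) + |X - X'| :=
  unmet_demand_contraction_general N hN φ hφ x x' X X'
end

section
/- Let N be a finite nonempty set of flows with positive weights φ_j > 0, served by a GPS scheduler with arrival processes (A_j)_{j∈N}, departure processes (D_j)_{j∈N}, and service process C. Let M ⊆ N and let (x_j)_{j∈M} be nonnegative numbers that are feasible for the resource X = 1, i.e., for every k ∈ M: (x_k/φ_k)·Σ_{j∈N\M} φ_j ≤ 1 − Σ_{j∈M} x_j. Define B_j*(t) := sup_{0 ≤ r ≤ t} { (A_j(t) − A_j(r)) − x_j·(C(t) − C(r)) }. Then for all 0 ≤ s ≤ t: Σ_{j∈M} (D_j(t) − D_j(s)) ≤ Σ_{j∈M} ( B_j*(t) + x_j·(C(t) − C(s)) ). -/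
/-!
Write `Q_j = A_j - D_j` for the backlogs, `S = ∑_{j∈M} x_j`, and let
`G(v) = ∑_{j∈M} (Q_j(v) - B*_j(v))` be the total excess of the backlogs over the virtual backlogs.
Since `B*_j(s) + A_j(s,t) - x_j C(s,t) ≤ B*_j(t)`, it suffices to show `G(s) ≤ 0`.

If flow `j ∈ M` is backlogged at `v`, let `w` be the start of its backlog period. On `(w, v]` the
scheduler is work-conserving and, by fairness and feasibility, the flows outside `M` receive at most
`(1 - S) / x_j` times the service of `j`. Together with `G(v) ≤ G(w) + S C(w,v) - ∑_{j∈M} D_j(w,v)`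
this gives `(1 - S) (Q_j(v) - B*_j(v)) ≤ x_j (G(w) - G(v))`. Summing over `j ∈ M` yields
`G(v) ≤ S · sup_{[0,s]} G` for all `v ∈ [0, s]`, which forces the supremum to be `≤ 0` when `S < 1`.
When `S = 1` the bound follows from work conservation alone.
-/

open Set

section GPS

variable {ι : Type*}

theorem exists_last_zero_of_continuousWithinAt_Iio {f : ℝ → ℝ}
    (hf : ∀ u, ContinuousWithinAt f (Iio u) u) {v : ℝ} (hv : 0 ≤ v) (h0 : f 0 = 0)
    (hfv : f v ≠ 0) : ∃ w ∈ Ico 0 v, f w = 0 ∧ ∀ u ∈ Ioc w v, f u ≠ 0 := by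
  set E := {u ∈ Icc 0 v | f u = 0}
  have h0E : (0 : ℝ) ∈ E := ⟨⟨le_rfl, hv⟩, h0⟩
  have hE : IsLUB E (sSup E) := isLUB_csSup ⟨0, h0E⟩ ⟨v, fun u hu => hu.1.2⟩
  have hfw : f (sSup E) = 0 := by
    by_contra hw
    have hEw : E ⊆ Iio (sSup E) := fun u hu => (hE.1 hu).lt_of_ne fun h => hw (h ▸ hu.2)
    have hcl := ((hf _).mono hEw).mem_closure_image (hE.mem_closure ⟨0, h0E⟩)
    have hfE : f '' E ⊆ {0} := by
      rintro _ ⟨u, hu, rfl⟩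
      exact hu.2
    exact hw (by simpa using closure_mono hfE hcl)
  have hw0 : 0 ≤ sSup E := hE.1 h0E
  have hwv : sSup E < v := (hE.2 fun u hu => hu.1.2).lt_of_ne fun h => hfv (h ▸ hfw)
  exact ⟨sSup E, ⟨hw0, hwv⟩, hfw, fun u hu hfu =>
    hu.1.not_ge (hE.1 ⟨⟨hw0.trans hu.1.le, hu.2⟩, hfu⟩)⟩

theorem csSup_nonpos_of_forall_le_mul {s : Set ℝ} (hs : s.Nonempty) {c : ℝ} (hc : c < 1)
    (h : ∀ y ∈ s, y ≤ c * sSup s) : sSup s ≤ 0 := by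
  have : sSup s ≤ c * sSup s := csSup_le hs h
  nlinarith

/-- Reich's formula: the backlog at time `t` of a queue fed by `a` and served by `x • c`. -/
noncomputable def virtualBacklog (a c : ℝ → ℝ) (x t : ℝ) : ℝ :=
  sSup ((fun r => (a t - a r) - x * (c t - c r)) '' Icc 0 t)

section virtualBacklog

variable {a c : ℝ → ℝ} {x : ℝ}

theorem le_virtualBacklog (ha : Monotone a) (hc : Monotone c) (hx : 0 ≤ x) {r t : ℝ}
    (hr : 0 ≤ r) (hrt : r ≤ t) : (a t - a r) - x * (c t - c r) ≤ virtualBacklog a c x t := by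
  refine le_csSup ⟨a t - a 0, ?_⟩ ⟨r, ⟨hr, hrt⟩, rfl⟩
  rintro _ ⟨q, hq, rfl⟩
  have := ha hq.1
  have := mul_nonneg hx (sub_nonneg.2 (hc hq.2))
  dsimp only
  linarith

theorem virtualBacklog_nonneg (ha : Monotone a) (hc : Monotone c) (hx : 0 ≤ x) {t : ℝ}
    (ht : 0 ≤ t) : 0 ≤ virtualBacklog a c x t := by
  simpa using le_virtualBacklog ha hc hx ht le_rfl

theorem virtualBacklog_add_le (ha : Monotone a) (hc : Monotone c) (hx : 0 ≤ x) {s t : ℝ}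
    (hs : 0 ≤ s) (hst : s ≤ t) :
    virtualBacklog a c x s + ((a t - a s) - x * (c t - c s)) ≤ virtualBacklog a c x t := by
  refine le_sub_iff_add_le.mp (csSup_le ⟨_, ⟨s, ⟨hs, le_rfl⟩, rfl⟩⟩ ?_)
  rintro _ ⟨r, hr, rfl⟩
  have := le_virtualBacklog ha hc hx hr.1 (hr.2.trans hst)
  dsimp only
  linarith

end virtualBacklog

noncomputable def backlogExcess (M : Finset ι) (A D : ι → ℝ → ℝ) (C : ℝ → ℝ) (x : ι → ℝ)
    (v : ℝ) : ℝ :=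
  ∑ j ∈ M, (A j v - D j v - virtualBacklog (A j) C (x j) v)

section backlogExcess

variable {M : Finset ι} {A D : ι → ℝ → ℝ} {C : ℝ → ℝ} {x : ι → ℝ}

theorem backlogExcess_le (hA : ∀ j ∈ M, Monotone (A j)) (hC : Monotone C)
    (hx : ∀ j ∈ M, 0 ≤ x j) {w v : ℝ} (hw : 0 ≤ w) (hwv : w ≤ v) :
    backlogExcess M A D C x v ≤
      backlogExcess M A D C x w + (∑ j ∈ M, x j) * (C v - C w) - ∑ j ∈ M, (D j v - D j w) := by
  have h := Finset.sum_le_sum fun j hj => virtualBacklog_add_le (hA j hj) hC (hx j hj) hw hwv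
  simp only [backlogExcess, Finset.sum_add_distrib, Finset.sum_sub_distrib, Finset.sum_mul]
    at h ⊢
  linarith

theorem sum_sub_le_of_backlogExcess_nonpos (hA : ∀ j ∈ M, Monotone (A j)) (hC : Monotone C)
    (hx : ∀ j ∈ M, 0 ≤ x j) {s t : ℝ} (hs : 0 ≤ s) (hst : s ≤ t)
    (hDA : ∀ j ∈ M, D j t ≤ A j t) (hE : backlogExcess M A D C x s ≤ 0) :
    ∑ j ∈ M, (D j t - D j s) ≤
      ∑ j ∈ M, (virtualBacklog (A j) C (x j) t + x j * (C t - C s)) := by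
  have h := Finset.sum_le_sum fun j hj => virtualBacklog_add_le (hA j hj) hC (hx j hj) hs hst
  have hD := Finset.sum_le_sum hDA
  simp only [backlogExcess, Finset.sum_add_distrib, Finset.sum_sub_distrib] at h hE ⊢
  linarith

end backlogExcess

structure IsGPS (N : Finset ι) (φ : ι → ℝ) (A D : ι → ℝ → ℝ) (C : ℝ → ℝ) : Prop where
  weight_pos : ∀ j ∈ N, 0 < φ j
  arrival_mono : ∀ j ∈ N, Monotone (A j)
  arrival_leftContinuous : ∀ j ∈ N, ∀ t : ℝ, ContinuousWithinAt (A j) (Iio t) t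
  arrival_zero : ∀ j ∈ N, ∀ t : ℝ, t ≤ 0 → A j t = 0
  departure_mono : ∀ j ∈ N, Monotone (D j)
  departure_leftContinuous : ∀ j ∈ N, ∀ t : ℝ, ContinuousWithinAt (D j) (Iio t) t
  departure_zero : ∀ j ∈ N, ∀ t : ℝ, t ≤ 0 → D j t = 0
  service_mono : Monotone C
  departure_le_arrival : ∀ j ∈ N, ∀ t : ℝ, D j t ≤ A j t
  work_le : ∀ s t : ℝ, 0 ≤ s → s ≤ t → ∑ j ∈ N, (D j t - D j s) ≤ C t - C s
  work_eq : ∀ s t : ℝ, 0 ≤ s → s ≤ t →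
    (∀ u : ℝ, s < u → u < t → 0 < ∑ j ∈ N, (A j u - D j u)) →
    ∑ j ∈ N, (D j t - D j s) = C t - C s
  fair : ∀ s t : ℝ, 0 ≤ s → s < t → ∀ i ∈ N,
    (∀ u : ℝ, s < u → u < t → 0 < A i u - D i u) →
    ∀ j ∈ N, (D j t - D j s) / φ j ≤ (D i t - D i s) / φ i

structure IsFeasible [DecidableEq ι] (N M : Finset ι) (φ x : ι → ℝ) : Prop where
  subset : M ⊆ N
  nonneg : ∀ j ∈ M, 0 ≤ x j
  share_le : ∀ k ∈ M, x k / φ k * ∑ j ∈ N \ M, φ j ≤ 1 - ∑ j ∈ M, x j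

variable {N M : Finset ι} {φ x : ι → ℝ} {A D : ι → ℝ → ℝ} {C : ℝ → ℝ}

theorem IsFeasible.sum_le_one [DecidableEq ι] (hF : IsFeasible N M φ x)
    (hφ : ∀ j ∈ N, 0 ≤ φ j) : ∑ j ∈ M, x j ≤ 1 := by
  rcases M.eq_empty_or_nonempty with rfl | ⟨k, hk⟩
  · simp
  · have hshare := hF.share_le k hk
    have : 0 ≤ x k / φ k * ∑ j ∈ N \ M, φ j :=
      mul_nonneg (div_nonneg (hF.nonneg k hk) (hφ k (hF.subset hk)))
        (Finset.sum_nonneg fun j hj => hφ j (Finset.mem_sdiff.1 hj).1)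
    linarith

namespace IsGPS

theorem exists_backlogged_since (hG : IsGPS N φ A D C) {j : ι} (hj : j ∈ N) {v : ℝ}
    (hv : 0 ≤ v) (hQ : D j v < A j v) :
    ∃ w ∈ Ico 0 v, A j w = D j w ∧ ∀ u ∈ Ioc w v, D j u < A j u := by
  obtain ⟨w, hw, hQw, hQpos⟩ := exists_last_zero_of_continuousWithinAt_Iio
    (fun u => (hG.arrival_leftContinuous j hj u).sub (hG.departure_leftContinuous j hj u)) hv
    (by simp [hG.arrival_zero j hj 0 le_rfl, hG.departure_zero j hj 0 le_rfl])
    (sub_ne_zero.2 hQ.ne')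
  exact ⟨w, hw, sub_eq_zero.1 hQw, fun u hu =>
    (hG.departure_le_arrival j hj u).lt_of_ne fun h => hQpos u hu (sub_eq_zero.2 h.symm)⟩

theorem sum_sub_eq_of_backlogged (hG : IsGPS N φ A D C) {j : ι} (hj : j ∈ N) {w v : ℝ}
    (hw : 0 ≤ w) (hwv : w ≤ v) (hback : ∀ u ∈ Ioo w v, D j u < A j u) :
    ∑ k ∈ N, (D k v - D k w) = C v - C w :=
  hG.work_eq w v hw hwv fun u hwu huv => (sub_pos.2 (hback u ⟨hwu, huv⟩)).trans_le
    (Finset.single_le_sum (f := fun k => A k u - D k u)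
      (fun k hk => sub_nonneg.2 (hG.departure_le_arrival k hk u)) hj)

theorem mul_sum_sub_le_of_backlogged (hG : IsGPS N φ A D C) {T : Finset ι} (hT : T ⊆ N)
    {j : ι} (hj : j ∈ N) {w v : ℝ} (hw : 0 ≤ w) (hwv : w < v)
    (hback : ∀ u ∈ Ioo w v, D j u < A j u) :
    φ j * ∑ k ∈ T, (D k v - D k w) ≤ (∑ k ∈ T, φ k) * (D j v - D j w) := by
  rw [Finset.mul_sum, Finset.sum_mul]
  refine Finset.sum_le_sum fun k hk => ?_
  have h := hG.fair w v hw hwv j hj (fun u hwu huv => sub_pos.2 (hback u ⟨hwu, huv⟩)) k (hT hk)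
  rw [div_le_div_iff₀ (hG.weight_pos k (hT hk)) (hG.weight_pos j hj)] at h
  linarith

variable [DecidableEq ι]

theorem one_sub_sum_mul_le_of_backlogged (hG : IsGPS N φ A D C) (hF : IsFeasible N M φ x)
    {j : ι} (hj : j ∈ M) {w v : ℝ} (hw : 0 ≤ w) (hwv : w < v)
    (hback : ∀ u ∈ Ioo w v, D j u < A j u) :
    (1 - ∑ k ∈ M, x k) * (x j * (C v - C w) - (D j v - D j w)) ≤
      x j * (∑ k ∈ M, (D k v - D k w) - (∑ k ∈ M, x k) * (C v - C w)) := by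
  have hjN := hF.subset hj
  have hφj := hG.weight_pos j hjN
  have hwork : ∑ k ∈ N \ M, (D k v - D k w) + ∑ k ∈ M, (D k v - D k w) = C v - C w := by
    rw [Finset.sum_sdiff hF.subset]
    exact hG.sum_sub_eq_of_backlogged hjN hw hwv.le hback
  have hfair := hG.mul_sum_sub_le_of_backlogged (T := N \ M) Finset.sdiff_subset hjN hw hwv hback
  have hfeas : x j * ∑ k ∈ N \ M, φ k ≤ (1 - ∑ k ∈ M, x k) * φ j := by
    have := hF.share_le j hj
    rw [div_mul_eq_mul_div, div_le_iff₀ hφj] at this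
    linarith
  have hDj : 0 ≤ D j v - D j w := sub_nonneg.2 (hG.departure_mono j hjN hwv.le)
  have hout : x j * ∑ k ∈ N \ M, (D k v - D k w) ≤ (1 - ∑ k ∈ M, x k) * (D j v - D j w) := by
    refine le_of_mul_le_mul_left ?_ hφj
    calc φ j * (x j * ∑ k ∈ N \ M, (D k v - D k w))
        = x j * (φ j * ∑ k ∈ N \ M, (D k v - D k w)) := by ring
      _ ≤ x j * ((∑ k ∈ N \ M, φ k) * (D j v - D j w)) :=
        mul_le_mul_of_nonneg_left hfair (hF.nonneg j hj)
      _ ≤ ((1 - ∑ k ∈ M, x k) * φ j) * (D j v - D j w) := by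
        rw [← mul_assoc]
        exact mul_le_mul_of_nonneg_right hfeas hDj
      _ = φ j * ((1 - ∑ k ∈ M, x k) * (D j v - D j w)) := by ring
  rw [← hwork]
  linear_combination hout

theorem exists_excess_le (hG : IsGPS N φ A D C) (hF : IsFeasible N M φ x) {j : ι} (hj : j ∈ M)
    {v : ℝ} (hv : 0 ≤ v) :
    ∃ w ∈ Icc 0 v, (1 - ∑ k ∈ M, x k) * (A j v - D j v - virtualBacklog (A j) C (x j) v) ≤
      x j * (backlogExcess M A D C x w - backlogExcess M A D C x v) := by
  have hjN := hF.subset hj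
  have hS := hF.sum_le_one fun k hk => (hG.weight_pos k hk).le
  have hAj := hG.arrival_mono j hjN
  rcases (hG.departure_le_arrival j hjN v).lt_or_eq with hQ | hQ
  · obtain ⟨w, ⟨hw, hwv⟩, hQw, hback⟩ := hG.exists_backlogged_since hjN hv hQ
    have hexcess : A j v - D j v - virtualBacklog (A j) C (x j) v ≤
        x j * (C v - C w) - (D j v - D j w) := by
      have := le_virtualBacklog hAj hG.service_mono (hF.nonneg j hj) hw hwv.le
      linarith
    have hcarry := backlogExcess_le (D := D) (fun k hk => hG.arrival_mono k (hF.subset hk))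
      hG.service_mono hF.nonneg hw hwv.le
    have hshare := hG.one_sub_sum_mul_le_of_backlogged hF hj hw hwv fun u hu =>
      hback u (Ioo_subset_Ioc_self hu)
    refine ⟨w, ⟨hw, hwv.le⟩, ?_⟩
    exact (mul_le_mul_of_nonneg_left hexcess (sub_nonneg.2 hS)).trans
      (hshare.trans (mul_le_mul_of_nonneg_left (by linarith) (hF.nonneg j hj)))
  · refine ⟨v, ⟨hv, le_rfl⟩, ?_⟩
    rw [hQ, sub_self, sub_self, mul_zero, zero_sub]
    exact mul_nonpos_of_nonneg_of_nonpos (sub_nonneg.2 hS)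
      (neg_nonpos.2 (virtualBacklog_nonneg hAj hG.service_mono (hF.nonneg j hj) hv))

theorem bddAbove_backlogExcess_image (hG : IsGPS N φ A D C) (hF : IsFeasible N M φ x)
    (s : ℝ) : BddAbove (backlogExcess M A D C x '' Icc 0 s) := by
  refine ⟨∑ j ∈ M, (A j s - D j 0), ?_⟩
  rintro _ ⟨v, hv, rfl⟩
  refine Finset.sum_le_sum fun j hj => ?_
  have := hG.arrival_mono j (hF.subset hj) hv.2
  have := hG.departure_mono j (hF.subset hj) hv.1
  have := virtualBacklog_nonneg (hG.arrival_mono j (hF.subset hj)) hG.service_mono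
    (hF.nonneg j hj) hv.1
  linarith

theorem backlogExcess_le_mul_sSup (hG : IsGPS N φ A D C) (hF : IsFeasible N M φ x) {s v : ℝ}
    (hv : v ∈ Icc 0 s) :
    backlogExcess M A D C x v ≤ (∑ j ∈ M, x j) * sSup (backlogExcess M A D C x '' Icc 0 s) := by
  set g := sSup (backlogExcess M A D C x '' Icc 0 s)
  have hle : ∀ u ∈ Icc 0 s, backlogExcess M A D C x u ≤ g := fun u hu =>
    le_csSup (hG.bddAbove_backlogExcess_image hF s) (mem_image_of_mem _ hu)
  have hflow : ∀ j ∈ M, (1 - ∑ k ∈ M, x k) * (A j v - D j v - virtualBacklog (A j) C (x j) v) ≤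
      x j * (g - backlogExcess M A D C x v) := by
    intro j hj
    obtain ⟨w, hw, hjw⟩ := hG.exists_excess_le hF hj hv.1
    have := hle w ⟨hw.1, hw.2.trans hv.2⟩
    exact hjw.trans (mul_le_mul_of_nonneg_left (by linarith) (hF.nonneg j hj))
  have hsum : (1 - ∑ k ∈ M, x k) * backlogExcess M A D C x v ≤
      (∑ j ∈ M, x j) * (g - backlogExcess M A D C x v) := by
    rw [backlogExcess, Finset.mul_sum, Finset.sum_mul]
    exact Finset.sum_le_sum hflow
  linarith

theorem backlogExcess_nonpos (hG : IsGPS N φ A D C) (hF : IsFeasible N M φ x)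
    (hS : ∑ j ∈ M, x j < 1) {s : ℝ} (hs : 0 ≤ s) : backlogExcess M A D C x s ≤ 0 :=
  (le_csSup (hG.bddAbove_backlogExcess_image hF s) (mem_image_of_mem _ ⟨hs, le_rfl⟩)).trans
    (csSup_nonpos_of_forall_le_mul ⟨_, mem_image_of_mem _ ⟨hs, le_rfl⟩⟩ hS
      (by rintro _ ⟨v, hv, rfl⟩; exact hG.backlogExcess_le_mul_sSup hF hv))

theorem sum_sub_le_of_sum_eq_one (hG : IsGPS N φ A D C) (hF : IsFeasible N M φ x)
    (hS : ∑ j ∈ M, x j = 1) {s t : ℝ} (hs : 0 ≤ s) (hst : s ≤ t) :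
    ∑ j ∈ M, (D j t - D j s) ≤
      ∑ j ∈ M, (virtualBacklog (A j) C (x j) t + x j * (C t - C s)) := by
  have hsub : ∑ j ∈ M, (D j t - D j s) ≤ ∑ j ∈ N, (D j t - D j s) :=
    Finset.sum_le_sum_of_subset_of_nonneg hF.subset fun k hk _ =>
      sub_nonneg.2 (hG.departure_mono k hk hst)
  calc ∑ j ∈ M, (D j t - D j s) ≤ C t - C s := hsub.trans (hG.work_le s t hs hst)
    _ = ∑ j ∈ M, x j * (C t - C s) := by rw [← Finset.sum_mul, hS, one_mul]
    _ ≤ _ := Finset.sum_le_sum fun j hj => le_add_of_nonneg_left <|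
      virtualBacklog_nonneg (hG.arrival_mono j (hF.subset hj)) hG.service_mono (hF.nonneg j hj)
        (hs.trans hst)

end IsGPS

end GPS

theorem gps_output_burstiness_general {ι : Type*} [DecidableEq ι] (N : Finset ι)
    (φ : ι → ℝ) (A D : ι → ℝ → ℝ) (C : ℝ → ℝ)
    (hφ : ∀ j ∈ N, 0 < φ j)
    (hAmono : ∀ j ∈ N, Monotone (A j))
    (hAlc : ∀ j ∈ N, ∀ t : ℝ, ContinuousWithinAt (A j) (Set.Iio t) t)
    (hAzero : ∀ j ∈ N, ∀ t : ℝ, t ≤ 0 → A j t = 0)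
    (hDmono : ∀ j ∈ N, Monotone (D j))
    (hDlc : ∀ j ∈ N, ∀ t : ℝ, ContinuousWithinAt (D j) (Set.Iio t) t)
    (hDzero : ∀ j ∈ N, ∀ t : ℝ, t ≤ 0 → D j t = 0)
    (hCmono : Monotone C)
    (hDA : ∀ j ∈ N, ∀ t : ℝ, D j t ≤ A j t)
    (hwork_le : ∀ s t : ℝ, 0 ≤ s → s ≤ t → ∑ j ∈ N, (D j t - D j s) ≤ C t - C s)
    (hwork_eq : ∀ s t : ℝ, 0 ≤ s → s ≤ t →
      (∀ u : ℝ, s < u → u < t → 0 < ∑ j ∈ N, (A j u - D j u)) →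
      ∑ j ∈ N, (D j t - D j s) = C t - C s)
    (hfair : ∀ s t : ℝ, 0 ≤ s → s < t → ∀ i ∈ N,
      (∀ u : ℝ, s < u → u < t → 0 < A i u - D i u) →
      ∀ j ∈ N, (D j t - D j s) / φ j ≤ (D i t - D i s) / φ i)
    (M : Finset ι) (hM : M ⊆ N)
    (x : ι → ℝ) (hx : ∀ j ∈ M, 0 ≤ x j)
    (hfeas : ∀ k ∈ M, (x k / φ k) * ∑ j ∈ N \ M, φ j ≤ 1 - ∑ j ∈ M, x j) :
    ∀ s t : ℝ, 0 ≤ s → s ≤ t →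
      ∑ j ∈ M, (D j t - D j s) ≤
        ∑ j ∈ M,
          (sSup ((fun r => (A j t - A j r) - x j * (C t - C r)) '' Set.Icc 0 t) +
            x j * (C t - C s)) := by
  intro s t hs hst
  have hG : IsGPS N φ A D C :=
    ⟨hφ, hAmono, hAlc, hAzero, hDmono, hDlc, hDzero, hCmono, hDA, hwork_le, hwork_eq, hfair⟩
  have hF : IsFeasible N M φ x := ⟨hM, hx, hfeas⟩
  rcases (hF.sum_le_one fun j hj => (hφ j hj).le).eq_or_lt with hS | hS
  · exact hG.sum_sub_le_of_sum_eq_one hF hS hs hst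
  · exact sum_sub_le_of_backlogExcess_nonpos (fun j hj => hAmono j (hM hj)) hCmono hx hs hst
      (fun j hj => hDA j (hM hj) t) (hG.backlogExcess_nonpos hF hS hs)

/-- **Output burstiness.** If `(x_j)_{j∈M}` is a feasible subset of
nonnegative requests for the resource `X = 1`, then the departures from a GPS
scheduler satisfy, for all `0 ≤ s ≤ t`,
`∑_{j∈M} D_j(s,t) ≤ ∑_{j∈M} (B*_j(t) + x_j (C(t) - C(s)))`, where
`B*_j(t) = sup_{0 ≤ r ≤ t} {(A_j(t) - A_j(r)) - x_j (C(t) - C(r))}`. -/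
theorem gps_output_burstiness {ι : Type*} [DecidableEq ι] (N : Finset ι) (hN : N.Nonempty)
    (φ : ι → ℝ) (A D : ι → ℝ → ℝ) (C : ℝ → ℝ)
    (hφ : ∀ j ∈ N, 0 < φ j)
    (hAmono : ∀ j ∈ N, Monotone (A j))
    (hAlc : ∀ j ∈ N, ∀ t : ℝ, ContinuousWithinAt (A j) (Set.Iio t) t)
    (hAzero : ∀ j ∈ N, ∀ t : ℝ, t ≤ 0 → A j t = 0)
    (hDmono : ∀ j ∈ N, Monotone (D j))
    (hDlc : ∀ j ∈ N, ∀ t : ℝ, ContinuousWithinAt (D j) (Set.Iio t) t)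
    (hDzero : ∀ j ∈ N, ∀ t : ℝ, t ≤ 0 → D j t = 0)
    (hCmono : Monotone C)
    (hClc : ∀ t : ℝ, ContinuousWithinAt C (Set.Iio t) t)
    (hCzero : ∀ t : ℝ, t ≤ 0 → C t = 0)
    (hDA : ∀ j ∈ N, ∀ t : ℝ, D j t ≤ A j t)
    (hwork_le : ∀ s t : ℝ, 0 ≤ s → s ≤ t → ∑ j ∈ N, (D j t - D j s) ≤ C t - C s)
    (hwork_eq : ∀ s t : ℝ, 0 ≤ s → s ≤ t →
      (∀ u : ℝ, s < u → u < t → 0 < ∑ j ∈ N, (A j u - D j u)) →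
      ∑ j ∈ N, (D j t - D j s) = C t - C s)
    (hfair : ∀ s t : ℝ, 0 ≤ s → s < t → ∀ i ∈ N,
      (∀ u : ℝ, s < u → u < t → 0 < A i u - D i u) →
      ∀ j ∈ N, (D j t - D j s) / φ j ≤ (D i t - D i s) / φ i)
    (M : Finset ι) (hM : M ⊆ N)
    (x : ι → ℝ) (hx : ∀ j ∈ M, 0 ≤ x j)
    (hfeas : ∀ k ∈ M, (x k / φ k) * ∑ j ∈ N \ M, φ j ≤ 1 - ∑ j ∈ M, x j) :
    ∀ s t : ℝ, 0 ≤ s → s ≤ t →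
      ∑ j ∈ M, (D j t - D j s) ≤
        ∑ j ∈ M,
          (sSup ((fun r => (A j t - A j r) - x j * (C t - C r)) '' Set.Icc 0 t) +
            x j * (C t - C s)) :=
  gps_output_burstiness_general N φ A D C hφ hAmono hAlc hAzero hDmono hDlc hDzero hCmono hDA
    hwork_le hwork_eq hfair M hM x hx hfeas
end

section
/- Let N be a finite nonempty set with weights φ_j > 0, and let τ > 0. For each j in a subset M ⊆ N, let E_j : ℝ → ℝ be concave, nonnegative and nondecreasing on (0,∞) with E_j(u) = 0 for u ≤ 0, and let 𝒞 : ℝ → ℝ be convex and nondecreasing on [0,∞) with 𝒞(0) = 0 and 𝒞(τ) > 0. Suppose each E_j has left derivative ρ_j at τ (i.e., E_j is differentiable at τ within the interval (0,τ) with derivative ρ_j), and 𝒞 has left derivative R at τ. Assume the requests (E_j(τ)/𝒞(τ))_{j∈M} are feasible for the resource X = 1, i.e., for every k ∈ M: (E_k(τ)/(φ_k·𝒞(τ)))·Σ_{j∈N\M} φ_j ≤ 1 − Σ_{j∈M} E_j(τ)/𝒞(τ). Then R > 0 and the requests (ρ_j/R)_{j∈M} are feasible for the resource X = 1, i.e.,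 for every k ∈ M: (ρ_k/(φ_k·R))·Σ_{j∈N\M} φ_j ≤ 1 − Σ_{j∈M} ρ_j/R. -/
open Filter Topology Set

/-- The left derivative of a convex function on `[0,∞)` with `f 0 = 0` at `τ > 0` is at
least the secant slope `f τ / τ`. -/
lemma left_deriv_ge_secant {𝒞 : ℝ → ℝ} {τ R : ℝ} (hτ : 0 < τ)
    (h𝒞conv : ConvexOn ℝ (Set.Ici (0:ℝ)) 𝒞) (h𝒞zero : 𝒞 0 = 0)
    (hR : HasDerivWithinAt 𝒞 R (Set.Iio τ) τ) : 𝒞 τ / τ ≤ R := by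
  have hslope : Tendsto (slope 𝒞 τ) (𝓝[Set.Iio τ] τ) (𝓝 R) :=
    (hasDerivWithinAt_iff_tendsto_slope' (by simp)).mp hR
  have : (𝓝[Set.Iio τ] τ).NeBot := inferInstance
  refine ge_of_tendsto hslope ?_
  filter_upwards [self_mem_nhdsWithin,
    (eventually_gt_nhds hτ).filter_mono nhdsWithin_le_nhds] with u huτ hu0
  have huτ' : u < τ := huτ
  have key := h𝒞conv.secant_mono (a := τ) (x := (0:ℝ)) (y := u)
    (le_of_lt hτ) (le_refl (0:ℝ)) (le_of_lt hu0) (ne_of_lt hτ) (ne_of_lt huτ') (le_of_lt hu0)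
  rw [h𝒞zero] at key
  have h1 : (0 - 𝒞 τ) / (0 - τ) = 𝒞 τ / τ := by
    rw [zero_sub, zero_sub, neg_div_neg_eq]
  rw [h1] at key
  simpa [slope_def_field, div_eq_div_iff] using key

lemma rho_nonneg {E : ℝ → ℝ} {τ ρ : ℝ} (hτ : 0 < τ)
    (hEmono : MonotoneOn E (Set.Ioi (0:ℝ)))
    (hρ : HasDerivWithinAt E ρ (Set.Ioo 0 τ) τ) : 0 ≤ ρ := by
  have hslope : Tendsto (slope E τ) (𝓝[Set.Ioo 0 τ] τ) (𝓝 ρ) :=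
    (hasDerivWithinAt_iff_tendsto_slope' (by simp)).mp hρ
  have : (𝓝[Set.Ioo 0 τ] τ).NeBot := right_nhdsWithin_Ioo_neBot hτ
  refine ge_of_tendsto hslope ?_
  filter_upwards [self_mem_nhdsWithin] with u hu
  have hle : E u ≤ E τ := hEmono hu.1 hτ (le_of_lt hu.2)
  have hlt : u - τ < 0 := sub_neg.mpr hu.2
  rw [slope_def_field]
  have : 0 ≤ (E τ - E u) / (τ - u) := div_nonneg (by linarith) (by linarith)
  have heq : (E u - E τ) / (u - τ) = (E τ - E u) / (τ - u) := by
    rw [← neg_div_neg_eq]; ring_nf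
  rw [heq]; exact this

lemma rho_mul_le {E : ℝ → ℝ} {τ ρ : ℝ} (hτ : 0 < τ)
    (hEconc : ConcaveOn ℝ (Set.Ioi (0:ℝ)) E)
    (hEnonneg : ∀ u : ℝ, 0 < u → 0 ≤ E u)
    (hρ : HasDerivWithinAt E ρ (Set.Ioo 0 τ) τ) : ρ * τ ≤ E τ := by
  have hslope : Tendsto (slope E τ) (𝓝[Set.Ioo 0 τ] τ) (𝓝 ρ) :=
    (hasDerivWithinAt_iff_tendsto_slope' (by simp)).mp hρ
  have hNB : (𝓝[Set.Ioo 0 τ] τ).NeBot := right_nhdsWithin_Ioo_neBot hτ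
  -- For each `u₀ ∈ (0, τ)`, `ρ * (τ - u₀) ≤ E τ`.
  have key : ∀ u₀ : ℝ, 0 < u₀ → u₀ < τ → ρ * (τ - u₀) ≤ E τ := by
    intro u₀ h1 h2
    have hρle : ρ ≤ (E u₀ - E τ) / (u₀ - τ) := by
      refine le_of_tendsto hslope ?_
      filter_upwards [self_mem_nhdsWithin,
        (eventually_gt_nhds h2).filter_mono nhdsWithin_le_nhds] with u hu hu₀u
      have hconv := hEconc.neg.secant_mono (a := τ) (x := u₀) (y := u)
        hτ h1 hu.1 (ne_of_lt h2) (ne_of_lt hu.2) (le_of_lt hu₀u)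
      rw [slope_def_field]
      have e1 : ((-E) u₀ - (-E) τ) / (u₀ - τ) = -((E u₀ - E τ) / (u₀ - τ)) := by
        simp only [Pi.neg_apply]; ring
      have e2 : ((-E) u - (-E) τ) / (u - τ) = -((E u - E τ) / (u - τ)) := by
        simp only [Pi.neg_apply]; ring
      rw [e1, e2, neg_le_neg_iff] at hconv
      exact hconv
    have h3 : (E u₀ - E τ) / (u₀ - τ) = (E τ - E u₀) / (τ - u₀) := by
      rw [← neg_div_neg_eq]; ring_nf
    rw [h3] at hρle
    have h4 : 0 < τ - u₀ := by linarith
    have h5 : ρ * (τ - u₀) ≤ E τ - E u₀ := by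
      have := mul_le_mul_of_nonneg_right hρle (le_of_lt h4)
      rwa [div_mul_cancel₀ _ (ne_of_gt h4)] at this
    have h6 : 0 ≤ E u₀ := hEnonneg u₀ h1
    linarith
  -- Take the limit `u₀ → 0⁺`.
  have hNB0 : (𝓝[Set.Ioo (0:ℝ) τ] 0).NeBot := left_nhdsWithin_Ioo_neBot hτ
  have htend : Tendsto (fun u₀ : ℝ => ρ * (τ - u₀)) (𝓝[Set.Ioo (0:ℝ) τ] 0)
      (𝓝 (ρ * τ)) := by
    have : Tendsto (fun u₀ : ℝ => ρ * (τ - u₀)) (𝓝 0) (𝓝 (ρ * (τ - 0))) := by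
      exact (tendsto_const_nhds.mul (tendsto_const_nhds.sub tendsto_id))
    simpa using this.mono_left nhdsWithin_le_nhds
  refine le_of_tendsto htend ?_
  filter_upwards [self_mem_nhdsWithin] with u₀ hu₀
  exact key u₀ hu₀.1 hu₀.2

/-- **Lemma on slopes.** Suppose the requests `(E_j(τ)/𝒞(τ))_{j∈M}`
are feasible for the resource `X = 1`, where each `E_j` is concave, nonnegative and
nondecreasing on `(0,∞)` and vanishes on `(-∞,0]`, and `𝒞` is convex and
nondecreasing on `[0,∞)` with `𝒞(0) = 0 < 𝒞(τ)`. If `ρ_j` is the derivative of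
`E_j` at `τ` within `(0,τ)` and `R` is the left derivative of `𝒞` at `τ`, then
`R > 0` and the requests `(ρ_j/R)_{j∈M}` are feasible for `X = 1`. -/
theorem slopes_feasible {ι : Type*} [DecidableEq ι]
    (N : Finset ι) (hN : N.Nonempty) (φ : ι → ℝ)
    (hφ : ∀ j ∈ N, 0 < φ j)
    (τ : ℝ) (hτ : 0 < τ)
    (M : Finset ι) (hM : M ⊆ N)
    (E : ι → ℝ → ℝ) (𝒞 : ℝ → ℝ)
    (hEconc : ∀ j ∈ M, ConcaveOn ℝ (Set.Ioi (0:ℝ)) (E j))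
    (hEnonneg : ∀ j ∈ M, ∀ u : ℝ, 0 < u → 0 ≤ E j u)
    (hEmono : ∀ j ∈ M, MonotoneOn (E j) (Set.Ioi (0:ℝ)))
    (hEzero : ∀ j ∈ M, ∀ u : ℝ, u ≤ 0 → E j u = 0)
    (h𝒞conv : ConvexOn ℝ (Set.Ici (0:ℝ)) 𝒞)
    (h𝒞mono : MonotoneOn 𝒞 (Set.Ici (0:ℝ)))
    (h𝒞zero : 𝒞 0 = 0) (h𝒞pos : 0 < 𝒞 τ)
    (ρ : ι → ℝ) (R : ℝ)
    (hρ : ∀ j ∈ M, HasDerivWithinAt (E j) (ρ j) (Set.Ioo 0 τ) τ)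
    (hR : HasDerivWithinAt 𝒞 R (Set.Iio τ) τ)
    (hfeas : ∀ k ∈ M,
      (E k τ / (φ k * 𝒞 τ)) * ∑ j ∈ N \ M, φ j ≤ 1 - ∑ j ∈ M, E j τ / 𝒞 τ) :
    0 < R ∧
      ∀ k ∈ M, (ρ k / (φ k * R)) * ∑ j ∈ N \ M, φ j ≤ 1 - ∑ j ∈ M, ρ j / R := by
  have hRge : 𝒞 τ / τ ≤ R := left_deriv_ge_secant hτ h𝒞conv h𝒞zero hR
  have hRpos : 0 < R := lt_of_lt_of_le (div_pos h𝒞pos hτ) hRge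
  have hρ0 : ∀ j ∈ M, 0 ≤ ρ j := fun j hj => rho_nonneg hτ (hEmono j hj) (hρ j hj)
  have hρE : ∀ j ∈ M, ρ j * τ ≤ E j τ := fun j hj =>
    rho_mul_le hτ (hEconc j hj) (hEnonneg j hj) (hρ j hj)
  have hkey : ∀ j ∈ M, ρ j / R ≤ E j τ / 𝒞 τ := by
    intro j hj
    calc ρ j / R ≤ ρ j / (𝒞 τ / τ) :=
          div_le_div_of_nonneg_left (hρ0 j hj) (div_pos h𝒞pos hτ) hRge
      _ = ρ j * τ / 𝒞 τ := by rw [div_div_eq_mul_div]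
      _ ≤ E j τ / 𝒞 τ := (div_le_div_iff_of_pos_right h𝒞pos).mpr (hρE j hj)
  refine ⟨hRpos, fun k hk => ?_⟩
  have hS : 0 ≤ ∑ j ∈ N \ M, φ j :=
    Finset.sum_nonneg fun j hj => (hφ j (Finset.mem_sdiff.mp hj).1).le
  have hsum : ∑ j ∈ M, ρ j / R ≤ ∑ j ∈ M, E j τ / 𝒞 τ := Finset.sum_le_sum hkey
  have h1 : ρ k / (φ k * R) * (∑ j ∈ N \ M, φ j)
      ≤ E k τ / (φ k * 𝒞 τ) * (∑ j ∈ N \ M, φ j) := by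
    apply mul_le_mul_of_nonneg_right _ hS
    have e1 : ρ k / (φ k * R) = (ρ k / R) / φ k := by rw [div_div, mul_comm]
    have e2 : E k τ / (φ k * 𝒞 τ) = (E k τ / 𝒞 τ) / φ k := by rw [div_div, mul_comm]
    rw [e1, e2]
    exact (div_le_div_iff_of_pos_right (hφ k (hM hk))).mpr (hkey k hk)
  linarith [hfeas k hk]
end

section
/- Let N be a finite nonempty set of flows with positive weights φ_j > 0, served by a GPS scheduler with arrival processes (A_j)_{j∈N}, departure processes (D_j)_{j∈N}, and service process C. Then for every flow i ∈ N and every t ≥ 0: D_i(t) ≥ inf_{0 ≤ s ≤ t} { A_i(s) + (φ_i / Σ_{j∈N} φ_j)·(C(t) − C(s)) }. -/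
/-- At a GPS scheduler, every flow `i ∈ N` is guaranteed
`D_i(t) ≥ inf_{0 ≤ s ≤ t} {A_i(s) + (φ_i / ∑_{j∈N} φ_j) (C(t) - C(s))}`. -/
theorem gps_single_flow_bound {ι : Type*} (N : Finset ι) (hN : N.Nonempty)
    (φ : ι → ℝ) (A D : ι → ℝ → ℝ) (C : ℝ → ℝ)
    (hφ : ∀ j ∈ N, 0 < φ j)
    (hAmono : ∀ j ∈ N, Monotone (A j))
    (hAlc : ∀ j ∈ N, ∀ t : ℝ, ContinuousWithinAt (A j) (Set.Iio t) t)
    (hAzero : ∀ j ∈ N, ∀ t : ℝ, t ≤ 0 → A j t = 0)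
    (hDmono : ∀ j ∈ N, Monotone (D j))
    (hDlc : ∀ j ∈ N, ∀ t : ℝ, ContinuousWithinAt (D j) (Set.Iio t) t)
    (hDzero : ∀ j ∈ N, ∀ t : ℝ, t ≤ 0 → D j t = 0)
    (hCmono : Monotone C)
    (hClc : ∀ t : ℝ, ContinuousWithinAt C (Set.Iio t) t)
    (hCzero : ∀ t : ℝ, t ≤ 0 → C t = 0)
    (hDA : ∀ j ∈ N, ∀ t : ℝ, D j t ≤ A j t)
    (hwork_le : ∀ s t : ℝ, 0 ≤ s → s ≤ t → ∑ j ∈ N, (D j t - D j s) ≤ C t - C s)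
    (hwork_eq : ∀ s t : ℝ, 0 ≤ s → s ≤ t →
      (∀ u : ℝ, s < u → u < t → 0 < ∑ j ∈ N, (A j u - D j u)) →
      ∑ j ∈ N, (D j t - D j s) = C t - C s)
    (hfair : ∀ s t : ℝ, 0 ≤ s → s < t → ∀ i ∈ N,
      (∀ u : ℝ, s < u → u < t → 0 < A i u - D i u) →
      ∀ j ∈ N, (D j t - D j s) / φ j ≤ (D i t - D i s) / φ i) :
    ∀ i ∈ N, ∀ t : ℝ, 0 ≤ t →
      sInf ((fun s => A i s + (φ i / ∑ j ∈ N, φ j) * (C t - C s)) '' Set.Icc 0 t) ≤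
        D i t := by
  intro i hi t ht
  have hφi := hφ i hi
  have hφsum : 0 < ∑ j ∈ N, φ j := Finset.sum_pos hφ hN
  set r : ℝ := φ i / ∑ j ∈ N, φ j with hr
  have hr0 : 0 ≤ r := le_of_lt (div_pos hφi hφsum)
  set f : ℝ → ℝ := fun u => A i u - D i u with hf
  have hf0 : ∀ u, 0 ≤ f u := fun u => sub_nonneg.2 (hDA i hi u)
  set S : Set ℝ := {u | u ∈ Set.Icc (0:ℝ) t ∧ f u = 0} with hS
  have h0S : (0:ℝ) ∈ S := by
    refine ⟨⟨le_refl _, ht⟩, ?_⟩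
    simp [hf, hAzero i hi 0 le_rfl, hDzero i hi 0 le_rfl]
  have hSne : S.Nonempty := ⟨0, h0S⟩
  have hSbdd : BddAbove S := ⟨t, fun u hu => hu.1.2⟩
  set s := sSup S with hs
  have hlub : IsLUB S s := isLUB_csSup hSne hSbdd
  have hs0 : 0 ≤ s := hlub.1 h0S
  have hst : s ≤ t := hlub.2 (fun u hu => hu.1.2)
  -- f s = 0
  have hfs : f s = 0 := by
    by_contra hne
    have hpos : 0 < f s := lt_of_le_of_ne (hf0 s) (Ne.symm hne)
    have hcont : ContinuousWithinAt f (Set.Iio s) s :=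
      (hAlc i hi s).sub (hDlc i hi s)
    have hev : ∀ᶠ u in nhdsWithin s (Set.Iio s), 0 < f u :=
      hcont.eventually (eventually_gt_nhds hpos)
    have hev' : ∀ᶠ u in nhds s, u ∈ Set.Iio s → 0 < f u :=
      eventually_nhdsWithin_iff.1 hev
    have hfreq : ∃ᶠ u in nhds s, u ∈ S :=
      mem_closure_iff_frequently.1 (hlub.mem_closure hSne)
    obtain ⟨u, huS, himp⟩ := (hfreq.and_eventually hev').exists
    have hus : u < s := lt_of_le_of_ne (hlub.1 huS) (by
      rintro rfl; exact hne huS.2)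
    exact absurd huS.2 (ne_of_gt (himp hus))
  have hAD : A i s = D i s := by
    have := hfs; simpa [hf, sub_eq_zero] using this
  -- positivity of f on (s, t]
  have hposf : ∀ u, s < u → u ≤ t → 0 < f u := by
    intro u h1 h2
    rcases lt_or_eq_of_le (hf0 u) with h | h
    · exact h
    · exact absurd (hlub.1 (⟨⟨le_trans hs0 (le_of_lt h1), h2⟩, h.symm⟩ : u ∈ S))
        (not_le.2 h1)
  -- key inequality
  have hkey : A i s + r * (C t - C s) ≤ D i t := by
    rcases eq_or_lt_of_le hst with heq | hlt
    · rw [hAD, heq]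
      simp
    · have hbacklog : ∀ u : ℝ, s < u → u < t → 0 < ∑ j ∈ N, (A j u - D j u) := by
        intro u h1 h2
        refine lt_of_lt_of_le (hposf u h1 h2.le) ?_
        exact Finset.single_le_sum (fun j hj => sub_nonneg.2 (hDA j hj u)) hi
      have hsum : ∑ j ∈ N, (D j t - D j s) = C t - C s :=
        hwork_eq s t hs0 hlt.le hbacklog
      have hfair' := hfair s t hs0 hlt i hi (fun u h1 h2 => hposf u h1 h2.le)
      have hsum_le : ∑ j ∈ N, (D j t - D j s) ≤
          (∑ j ∈ N, φ j) * ((D i t - D i s) / φ i) := by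
        rw [Finset.sum_mul]
        refine Finset.sum_le_sum (fun j hj => ?_)
        have hφj := hφ j hj
        have := hfair' j hj
        calc D j t - D j s = φ j * ((D j t - D j s) / φ j) := by
              field_simp
          _ ≤ φ j * ((D i t - D i s) / φ i) := by
              exact mul_le_mul_of_nonneg_left this hφj.le
      have hC : C t - C s ≤ (∑ j ∈ N, φ j) * ((D i t - D i s) / φ i) :=
        hsum ▸ hsum_le
      have hmul : r * (C t - C s) ≤ D i t - D i s := by
        have h1 : r * (C t - C s) ≤ r * ((∑ j ∈ N, φ j) * ((D i t - D i s) / φ i)) :=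
          mul_le_mul_of_nonneg_left hC hr0
        have h2 : r * ((∑ j ∈ N, φ j) * ((D i t - D i s) / φ i)) = D i t - D i s := by
          rw [hr]; field_simp
        linarith
      rw [hAD]; linarith
  -- conclude via csInf_le
  have hmem : A i s + r * (C t - C s) ∈
      ((fun s' => A i s' + r * (C t - C s')) '' Set.Icc 0 t) :=
    ⟨s, ⟨hs0, hst⟩, rfl⟩
  have hbdd : BddBelow ((fun s' => A i s' + r * (C t - C s')) '' Set.Icc 0 t) := by
    refine ⟨0, ?_⟩
    rintro x ⟨s', ⟨h0', ht'⟩, rfl⟩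
    have hA0 : 0 ≤ A i s' := by
      have := hAmono i hi h0'
      rw [hAzero i hi 0 le_rfl] at this; exact this
    have hC0 : 0 ≤ C t - C s' := sub_nonneg.2 (hCmono ht')
    positivity
  exact le_trans (csInf_le hbdd hmem) hkey
end
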